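/- arXiv:1311.6235 — 9 statements merged into one kernel-verified Lean document; each statement's English description precedes it below -/
import Mathlib

section
/- Let α = v[i..j] and α' = v[i'..j'] be two distinct runs of a word v with the same shortest period p. Then the length of their overlap is smaller than p, i.e., min(j, j') − max(i, i') + 1 < p. -/
/-- `x` occurs in `w` at 0-indexed position `i`
    (position `i+1` in the paper's 1-indexed convention). -/
def OccursAt {α : Type*} (x w : List α) (i : ℕ) : Prop := x <+: w.drop i

/-- `p` is a period of `w`: `w[t] = w[t+p]` whenever both positions exist. -/
def HasPeriod {α : Type*} (w : List α) (p : ℕ) : Prop :=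
  ∀ i, i + p < w.length → w[i]? = w[i + p]?

/-- `per(w)`: the smallest positive period of `w`. -/
noncomputable def minPeriod {α : Type*} (w : List α) : ℕ :=
  sInf {p | 0 < p ∧ HasPeriod w p}

/-- The fragment `v[a..b]` with 0-indexed inclusive endpoints `a ≤ b`. -/
def frag {α : Type*} (v : List α) (a b : ℕ) : List α := (v.drop a).take (b + 1 - a)

/-- `v[a..b]` (0-indexed) is a run of `v`: it is periodic and maximal. -/
def IsRun {α : Type*} (v : List α) (a b : ℕ) : Prop :=
  a ≤ b ∧ b < v.length ∧
  2 * minPeriod (frag v a b) ≤ b + 1 - a ∧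
  (a = 0 ∨ v[a - 1]? ≠ v[a + minPeriod (frag v a b) - 1]?) ∧
  (b = v.length - 1 ∨ v[b + 1 - minPeriod (frag v a b)]? ≠ v[b + 1]?)

lemma minPeriod_spec {α : Type*} {w : List α} (hw : w ≠ []) :
    0 < minPeriod w ∧ HasPeriod w (minPeriod w) := by
  have hlen : 0 < w.length := List.length_pos_iff.mpr hw
  have : minPeriod w ∈ {p | 0 < p ∧ HasPeriod w p} := by
    apply Nat.sInf_mem
    exact ⟨w.length, hlen, fun i hi => absurd hi (by omega)⟩
  exact this

lemma frag_getElem? {α : Type*} {v : List α} (a b : ℕ) {j : ℕ} (hj : j < b + 1 - a) :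
    (frag v a b)[j]? = v[a + j]? := by
  rw [frag, List.getElem?_take_of_lt hj, List.getElem?_drop]

lemma frag_period {α : Type*} {v : List α} {a b p : ℕ} (hb : b < v.length)
    (hper : HasPeriod (frag v a b) p) :
    ∀ i, a ≤ i → i + p ≤ b → v[i]? = v[i + p]? := by
  intro i hi hip
  have hlen : (frag v a b).length = b + 1 - a := by
    simp only [frag, List.length_take, List.length_drop]
    omega
  have h1 := hper (i - a) (by omega)
  rw [frag_getElem? a b (by omega), frag_getElem? a b (by omega)] at h1
  have e1 : a + (i - a) = i := by omega
  have e2 : a + (i - a + p) = i + p := by omega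
  rw [e1, e2] at h1
  exact h1

/-- two distinct runs of `v` with the same shortest period `p`
overlap in fewer than `p` positions. -/
theorem runs_same_period_small_overlap {α : Type*} (v : List α)
    (a b a' b' p : ℕ)
    (h : IsRun v a b) (h' : IsRun v a' b') (hne : (a, b) ≠ (a', b'))
    (hp : minPeriod (frag v a b) = p) (hp' : minPeriod (frag v a' b') = p) :
    (min b b' : ℤ) - (max a a' : ℤ) + 1 < (p : ℤ) := by
  by_contra hcon
  push_neg at hcon
  obtain ⟨hab, hbv, h2p, hleft, hright⟩ := h
  obtain ⟨hab', hbv', h2p', hleft', hright'⟩ := h'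
  rw [hp] at h2p hleft hright
  rw [hp'] at h2p' hleft' hright'
  have hfne : frag v a b ≠ [] := by
    have : (frag v a b).length = b + 1 - a := by
      simp only [frag, List.length_take, List.length_drop]; omega
    intro hc; rw [hc] at this; simp at this; omega
  have hfne' : frag v a' b' ≠ [] := by
    have : (frag v a' b').length = b' + 1 - a' := by
      simp only [frag, List.length_take, List.length_drop]; omega
    intro hc; rw [hc] at this; simp at this; omega
  obtain ⟨hppos, hper⟩ := minPeriod_spec hfne
  obtain ⟨hppos', hper'⟩ := minPeriod_spec hfne'
  rw [hp] at hppos hper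
  rw [hp'] at hppos' hper'
  have P : ∀ i, a ≤ i → i + p ≤ b → v[i]? = v[i + p]? := frag_period hbv hper
  have P' : ∀ i, a' ≤ i → i + p ≤ b' → v[i]? = v[i + p]? := frag_period hbv' hper'
  -- overlap bound as naturals
  have hov : max a a' + p ≤ min b b' + 1 := by omega
  rcases lt_trichotomy a a' with hlt | heq | hgt
  · -- a < a' : contradict left maximality of the second run
    rcases hleft' with h0 | hne'
    · omega
    · apply hne'
      have := P (a' - 1) (by omega) (by omega)
      have e : a' + p - 1 = a' - 1 + p := by omega
      rw [e]
      exact this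
  · subst heq
    rcases lt_trichotomy b b' with hblt | hbeq | hbgt
    · -- b < b' : contradict right maximality of the first run
      rcases hright with h0 | hne''
      · omega
      · apply hne''
        have := P' (b + 1 - p) (by omega) (by omega)
        have e : b + 1 - p + p = b + 1 := by omega
        rw [e] at this
        exact this
    · exact hne (by rw [hbeq])
    · rcases hright' with h0 | hne''
      · omega
      · apply hne''
        have := P (b' + 1 - p) (by omega) (by omega)
        have e : b' + 1 - p + p = b' + 1 := by omega
        rw [e] at this
        exact this
  · -- a' < a : contradict left maximality of the first run
    rcases hleft with h0 | hne'
    · omega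
    · apply hne'
      have := P' (a - 1) (by omega) (by omega)
      have e : a + p - 1 = a - 1 + p := by omega
      rw [e]
      exact this
end

section
/- Let u = v[a..b] be a periodic fragment of a word v. Then there exists exactly one run α of v such that u is a subfragment of α and per(α) ≤ |u| − per(u); moreover, this run α satisfies per(α) = per(u) ≤ |u|/2. -/
namespace RunAux

variable {α : Type*}

lemma frag_length (v : List α) (a b : ℕ) (hb : b < v.length) :
    (frag v a b).length = b + 1 - a := by
  simp [frag]; omega

lemma frag_getElem? (v : List α) (a b i : ℕ) (h : i < b + 1 - a) :
    (frag v a b)[i]? = v[a + i]? := by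
  unfold frag
  rw [List.getElem?_take]
  simp [h, List.getElem?_drop]

lemma hasPeriod_iff (v : List α) (a b p : ℕ) (hb : b < v.length) :
    HasPeriod (frag v a b) p ↔ ∀ t, a ≤ t → t + p ≤ b → v[t]? = v[t + p]? := by
  constructor
  · intro H t ht htp
    have h1 : (t - a) + p < b + 1 - a := by omega
    have := H (t - a) (by rw [frag_length v a b hb]; exact h1)
    rw [frag_getElem? v a b _ (by omega), frag_getElem? v a b _ h1] at this
    have e1 : a + (t - a) = t := by omega
    have e2 : a + (t - a + p) = t + p := by omega
    rwa [e1, e2] at this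
  · intro H i hi
    rw [frag_length v a b hb] at hi
    rw [frag_getElem? v a b _ (by omega), frag_getElem? v a b _ (by omega)]
    have := H (a + i) (by omega) (by omega)
    rwa [Nat.add_assoc] at this

lemma minPeriod_spec (w : List α) (hw : w ≠ []) :
    0 < minPeriod w ∧ HasPeriod w (minPeriod w) := by
  have : minPeriod w ∈ {p | 0 < p ∧ HasPeriod w p} := by
    apply Nat.sInf_mem
    exact ⟨w.length, List.length_pos_iff.mpr hw, fun i hi => absurd hi (by omega)⟩
  exact this

lemma minPeriod_le (w : List α) (q : ℕ) (hq : 0 < q) (h : HasPeriod w q) :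
    minPeriod w ≤ q := Nat.sInf_le ⟨hq, h⟩

lemma propagate (v : List α) (a b p q : ℕ) {c d : ℕ}
    (hq : 0 < q) (hca : c ≤ a) (hbd : b ≤ d)
    (hsum : a + q + p ≤ b + 1)
    (hPu : ∀ t, a ≤ t → t + p ≤ b → v[t]? = v[t + p]?)
    (hPw : ∀ t, c ≤ t → t + q ≤ d → v[t]? = v[t + q]?) :
    ∀ t, c ≤ t → t + p ≤ d → v[t]? = v[t + p]? := by
  have claimL : ∀ j, 1 ≤ j → c + j ≤ a → v[a - j]? = v[a - j + p]? := by
    intro j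
    induction j using Nat.strong_induction_on with
    | _ j ih =>
      intro hj1 hja
      set t := a - j with ht
      have h1 : v[t]? = v[t + q]? := hPw t (by omega) (by omega)
      have h2 : v[t + p]? = v[t + p + q]? := hPw (t + p) (by omega) (by omega)
      have h3 : v[t + q]? = v[t + q + p]? := by
        by_cases hcase : j ≤ q
        · exact hPu (t + q) (by omega) (by omega)
        · have := ih (j - q) (by omega) (by omega) (by omega)
          have e : a - (j - q) = t + q := by omega
          rwa [e] at this
      rw [h1, h3, show t + q + p = t + p + q from by omega]
      exact h2.symm
  have hpb : p ≤ b := by omega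
  have claimR : ∀ j, 1 ≤ j → b + j ≤ d → v[b + j - p]? = v[b + j]? := by
    intro j
    induction j using Nat.strong_induction_on with
    | _ j ih =>
      intro hj1 hjd
      set t := b + j - p with ht
      have h1 : v[t - q]? = v[t]? := by
        have := hPw (t - q) (by omega) (by omega)
        rwa [show t - q + q = t from by omega] at this
      have h2 : v[t + p - q]? = v[t + p]? := by
        have := hPw (t + p - q) (by omega) (by omega)
        rwa [show t + p - q + q = t + p from by omega] at this
      have h3 : v[t - q]? = v[t - q + p]? := by
        by_cases hcase : j ≤ q
        · exact hPu (t - q) (by omega) (by omega)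
        · have := ih (j - q) (by omega) (by omega) (by omega)
          have e1 : b + (j - q) - p = t - q := by omega
          have e2 : b + (j - q) = t - q + p := by omega
          rwa [e1, e2] at this
      rw [show b + j = t + p from by omega, ← h1, h3,
        show t - q + p = t + p - q from by omega]
      exact h2
  intro t htc htd
  rcases lt_or_ge t a with h | h
  · have := claimL (a - t) (by omega) (by omega)
    rwa [show a - (a - t) = t from by omega] at this
  · rcases le_or_gt (t + p) b with h' | h'
    · exact hPu t h h'
    · have := claimR (t + p - b) (by omega) (by omega)
      rwa [show b + (t + p - b) = t + p from by omega,
        show t + p - p = t from by omega] at this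

end RunAux

open RunAux

/-- for a periodic fragment `u = v[a..b]` there is exactly one run
`α` of `v` containing `u` with `per(α) ≤ |u| − per(u)`; moreover this run has
`per(α) = per(u)` and `per(u) ≤ |u|/2`. -/
theorem unique_run_extending_periodic_fragment {α : Type*} (v : List α) (a b : ℕ)
    (hab : a ≤ b) (hb : b < v.length)
    (hper : 2 * minPeriod (frag v a b) ≤ b + 1 - a) :
    (∃! r : ℕ × ℕ, IsRun v r.1 r.2 ∧ r.1 ≤ a ∧ b ≤ r.2 ∧
        minPeriod (frag v r.1 r.2) ≤ (b + 1 - a) - minPeriod (frag v a b)) ∧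
    (∀ r : ℕ × ℕ, IsRun v r.1 r.2 → r.1 ≤ a → b ≤ r.2 →
        minPeriod (frag v r.1 r.2) ≤ (b + 1 - a) - minPeriod (frag v a b) →
        minPeriod (frag v r.1 r.2) = minPeriod (frag v a b)) ∧
    2 * minPeriod (frag v a b) ≤ b + 1 - a := by
  classical
  set p := minPeriod (frag v a b) with hpdef
  have hfragne : frag v a b ≠ [] := by
    intro h
    have := frag_length v a b hb
    rw [h] at this
    simp at this
    omega
  obtain ⟨hppos, hPp⟩ := minPeriod_spec (frag v a b) hfragne
  have hPu : ∀ t, a ≤ t → t + p ≤ b → v[t]? = v[t + p]? :=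
    (hasPeriod_iff v a b p hb).1 hPp
  -- left extension
  have hgex : ∃ g, ¬(g + 1 ≤ a ∧ v[a - (g + 1)]? = v[a - (g + 1) + p]?) :=
    ⟨a, by rintro ⟨h, -⟩; omega⟩
  set g := Nat.find hgex with hgdef
  have hgspec := Nat.find_spec hgex
  have hglt : ∀ j, j < g → j + 1 ≤ a ∧ v[a - (j + 1)]? = v[a - (j + 1) + p]? :=
    fun j hj => not_not.mp (Nat.find_min hgex hj)
  have hga : g ≤ a := by
    rcases Nat.eq_zero_or_pos g with h0 | h0
    · omega
    · have := (hglt (g - 1) (by omega)).1; omega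
  set a' := a - g with ha'def
  have hleft : ∀ t, a' ≤ t → t < a → v[t]? = v[t + p]? := by
    intro t h1 h2
    have hj := hglt (a - 1 - t) (by omega)
    have hj2 := hj.2
    rwa [show a - (a - 1 - t + 1) = t from by omega] at hj2
  -- right extension
  have hfex : ∃ f, ¬(b + (f + 1) < v.length ∧ v[b + (f + 1) - p]? = v[b + (f + 1)]?) :=
    ⟨v.length, by rintro ⟨h, -⟩; omega⟩
  set f := Nat.find hfex with hfdef
  have hfspec := Nat.find_spec hfex
  have hflt : ∀ j, j < f → b + (j + 1) < v.length ∧ v[b + (j + 1) - p]? = v[b + (j + 1)]? :=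
    fun j hj => not_not.mp (Nat.find_min hfex hj)
  set b' := b + f with hb'def
  have hb' : b' < v.length := by
    rcases Nat.eq_zero_or_pos f with h0 | h0
    · omega
    · have := (hflt (f - 1) (by omega)).1; omega
  have hright : ∀ t, b < t + p → t + p ≤ b' → v[t]? = v[t + p]? := by
    intro t h1 h2
    have hj := hflt (t + p - b - 1) (by omega)
    rw [show b + (t + p - b - 1 + 1) = t + p from by omega] at hj
    have hj2 := hj.2
    rwa [show t + p - p = t from by omega] at hj2
  -- the extended fragment has period p
  have hPext : ∀ t, a' ≤ t → t + p ≤ b' → v[t]? = v[t + p]? := by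
    intro t h1 h2
    rcases lt_or_ge t a with h | h
    · exact hleft t h1 h
    · rcases le_or_gt (t + p) b with h' | h'
      · exact hPu t h h'
      · exact hright t h' h2
  have hPfrag' : HasPeriod (frag v a' b') p := (hasPeriod_iff v a' b' p hb').2 hPext
  have hfragne' : frag v a' b' ≠ [] := by
    intro h
    have := frag_length v a' b' hb'
    rw [h] at this
    simp at this
    omega
  obtain ⟨hq'pos, hq'⟩ := minPeriod_spec (frag v a' b') hfragne'
  have hminle : minPeriod (frag v a' b') ≤ p := minPeriod_le _ p hppos hPfrag'
  have hminge : p ≤ minPeriod (frag v a' b') := by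
    apply minPeriod_le _ _ hq'pos
    apply (hasPeriod_iff v a b _ hb).2
    intro t ht htp
    exact (hasPeriod_iff v a' b' _ hb').1 hq' t (by omega) (by omega)
  have hmin' : minPeriod (frag v a' b') = p := le_antisymm hminle hminge
  have hrun : IsRun v a' b' := by
    refine ⟨by omega, hb', ?_, ?_, ?_⟩
    · rw [hmin']; omega
    · rw [hmin']
      rcases Nat.eq_zero_or_pos a' with h0 | h0
      · exact Or.inl h0
      · right
        intro hcon
        apply hgspec
        refine ⟨by omega, ?_⟩
        rwa [show a - (g + 1) = a' - 1 from by omega,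
          show a' - 1 + p = a' + p - 1 from by omega]
    · rw [hmin']
      by_cases hcase : b' = v.length - 1
      · exact Or.inl hcase
      · right
        intro hcon
        apply hfspec
        refine ⟨by omega, ?_⟩
        rwa [show b + (f + 1) - p = b' + 1 - p from by omega,
          show b + (f + 1) = b' + 1 from by omega]
  -- uniqueness
  have huniq : ∀ c d : ℕ, IsRun v c d → c ≤ a → b ≤ d →
      minPeriod (frag v c d) ≤ (b + 1 - a) - p →
      c = a' ∧ d = b' ∧ minPeriod (frag v c d) = p := by
    intro c d hrun2 hca hbd hqle
    obtain ⟨hcd, hd, hper2, hmaxl, hmaxr⟩ := hrun2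
    set q := minPeriod (frag v c d) with hqdef
    have hfragne2 : frag v c d ≠ [] := by
      intro h
      have := frag_length v c d hd
      rw [h] at this
      simp at this
      omega
    obtain ⟨hqpos2, hq2⟩ := minPeriod_spec (frag v c d) hfragne2
    have hPw : ∀ t, c ≤ t → t + q ≤ d → v[t]? = v[t + q]? :=
      (hasPeriod_iff v c d q hd).1 hq2
    have hpq : p ≤ q := by
      apply minPeriod_le _ _ hqpos2
      apply (hasPeriod_iff v a b q hb).2
      intro t ht htq
      exact hPw t (by omega) (by omega)
    have hsum : a + q + p ≤ b + 1 := by omega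
    have hPwp : ∀ t, c ≤ t → t + p ≤ d → v[t]? = v[t + p]? :=
      propagate v a b p q hqpos2 hca hbd hsum hPu hPw
    have hqp : q = p := le_antisymm
      (minPeriod_le (frag v c d) p hppos ((hasPeriod_iff v c d p hd).2 hPwp)) hpq
    have hca' : a' ≤ c := by
      by_contra hcon
      push_neg at hcon
      have h1 : v[a' - 1]? = v[a' - 1 + p]? := hPwp (a' - 1) (by omega) (by omega)
      apply hgspec
      refine ⟨by omega, ?_⟩
      rwa [show a - (g + 1) = a' - 1 from by omega]
    have hca2 : c ≤ a' := by
      rcases hmaxl with h0 | hne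
      · omega
      · by_contra hcon
        push_neg at hcon
        rw [hqp] at hne
        apply hne
        have := hleft (c - 1) (by omega) (by omega)
        rwa [show c - 1 + p = c + p - 1 from by omega] at this
    have hdb' : d ≤ b' := by
      by_contra hcon
      push_neg at hcon
      apply hfspec
      refine ⟨by omega, ?_⟩
      have := hPwp (b' + 1 - p) (by omega) (by omega)
      rw [show b' + 1 - p + p = b' + 1 from by omega] at this
      rwa [show b + (f + 1) - p = b' + 1 - p from by omega,
        show b + (f + 1) = b' + 1 from by omega]
    have hdb2 : b' ≤ d := by
      rcases hmaxr with h0 | hne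
      · omega
      · by_contra hcon
        push_neg at hcon
        rw [hqp] at hne
        apply hne
        have := hright (d + 1 - p) (by omega) (by omega)
        rwa [show d + 1 - p + p = d + 1 from by omega] at this
    exact ⟨by omega, by omega, hqp⟩
  refine ⟨⟨(a', b'), ⟨hrun, by omega, by omega, by rw [hmin']; omega⟩, ?_⟩, ?_, hper⟩
  · rintro ⟨c, d⟩ ⟨hr, h1, h2, h3⟩
    obtain ⟨e1, e2, -⟩ := huniq c d hr h1 h2 h3
    simp only [Prod.mk.injEq]
    exact ⟨e1, e2⟩
  · rintro ⟨c, d⟩ hr h1 h2 h3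
    exact (huniq c d hr h1 h2 h3).2.2
end

section
/- Let k ≥ 0 be an integer and let u₁, u₂, u₃ be periodic fragments of a word v, all starting at the same position i, each of length at least 2^k and each with shortest period less than 2^k. For each t, let α_t = run(u_t) be the unique run of v that contains u_t as a subfragment and has per(α_t) = per(u_t). Then α₁, α₂, α₃ cannot be pairwise distinct. -/
namespace StmtSix

variable {α : Type*}

/-- `v` has period `P` on the (inclusive) index interval `[a, e]`. -/
def PerI (v : List α) (a e P : ℕ) : Prop :=
  ∀ j, a ≤ j → j + P ≤ e → v[j]? = v[j + P]?

theorem perI_mono {v : List α} {a e a' e' P : ℕ} (h : PerI v a e P)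
    (ha : a ≤ a') (he : e' ≤ e) : PerI v a' e' P :=
  fun j hj hje => h j (ha.trans hj) (hje.trans he)

theorem perI_step {v : List α} {a e P : ℕ} (h : PerI v a e P) :
    ∀ (t x : ℕ), a ≤ x → x + t * P ≤ e → v[x]? = v[x + t * P]? := by
  intro t
  induction t with
  | zero => intro x _ _; simp
  | succ t ih =>
    intro x hx hxe
    have hmul : x + P + t * P = x + (t + 1) * P := by ring
    have hmul2 : t * P + P = (t + 1) * P := by ring
    have h1 : v[x]? = v[x + P]? := h x hx (by omega)
    have h2 : v[x + P]? = v[x + P + t * P]? := ih (x + P) (by omega) (by omega)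
    rw [hmul] at h2
    exact h1.trans h2

theorem perI_conn {v : List α} {a e P : ℕ} (h : PerI v a e P) (hP0 : 0 < P)
    {x y : ℕ} (hx : a ≤ x) (hy : a ≤ y) (hxe : x ≤ e) (hye : y ≤ e)
    (hmod : x % P = y % P) : v[x]? = v[y]? := by
  rcases le_total x y with hle | hle
  · have hdvd : P ∣ y - x := (Nat.modEq_iff_dvd' hle).mp hmod
    obtain ⟨t, ht⟩ := hdvd
    have hmul : P * t = t * P := by ring
    have hxy : x + t * P = y := by omega
    have := perI_step h t x hx (by omega)
    rwa [hxy] at this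
  · have hdvd : P ∣ x - y := (Nat.modEq_iff_dvd' hle).mp hmod.symm
    obtain ⟨t, ht⟩ := hdvd
    have hmul : P * t = t * P := by ring
    have hxy : y + t * P = x := by omega
    have := perI_step h t y hy (by omega)
    rw [hxy] at this
    exact this.symm

end StmtSix
namespace StmtSix
variable {α : Type*}

theorem eq_of_mod_window {P C x y : ℕ} (hP0 : 0 < P)
    (hx1 : C ≤ x) (hx2 : x < C + P) (hy1 : C ≤ y) (hy2 : y < C + P)
    (hmod : x % P = y % P) : x = y := by
  rcases le_total x y with hle | hle
  · obtain ⟨t, ht⟩ := (Nat.modEq_iff_dvd' hle).mp hmod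
    rcases t with _ | t
    · omega
    · exfalso
      have : P * (t + 1) = P * t + P := by ring
      omega
  · obtain ⟨t, ht⟩ := (Nat.modEq_iff_dvd' hle).mp hmod.symm
    rcases t with _ | t
    · omega
    · exfalso
      have : P * (t + 1) = P * t + P := by ring
      omega

/-- A representative of the residue class of `j` mod `P` inside `[C, C+P)`. -/
theorem exists_rep {P C j : ℕ} (hP0 : 0 < P) :
    ∃ m, C ≤ m ∧ m < C + P ∧ m % P = j % P := by
  have hj : j % P < P := Nat.mod_lt _ hP0
  have hC : C % P < P := Nat.mod_lt _ hP0
  have hdiv := Nat.div_add_mod C P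
  by_cases h : C % P ≤ j % P
  · refine ⟨C - C % P + j % P, by omega, by omega, ?_⟩
    have hm : C - C % P + j % P = P * (C / P) + j % P := by omega
    rw [hm, Nat.mul_add_mod, Nat.mod_eq_of_lt hj]
  · refine ⟨C - C % P + j % P + P, by omega, by omega, ?_⟩
    have hm : C - C % P + j % P + P = P * (C / P + 1) + j % P := by
      have : P * (C / P + 1) = P * (C / P) + P := by ring
      omega
    rw [hm, Nat.mul_add_mod, Nat.mod_eq_of_lt hj]

/-- Propagation: if `v` has period `P` on `[A,E]`, and period `d` (with `d ∣ P`)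
on a subwindow `[C,D]` of length at least `P`, then `v` has period `d` on all
of `[A,E]`. -/
theorem perI_prop {v : List α} {A E C D P d : ℕ} (hP0 : 0 < P) (hd0 : 0 < d)
    (hdP : d ∣ P) (hAC : A ≤ C) (hDE : D ≤ E) (hwin : C + P ≤ D + 1)
    (hP : PerI v A E P) (hd : PerI v C D d) : PerI v A E d := by
  have hdleP : d ≤ P := Nat.le_of_dvd hP0 hdP
  intro j hj hje
  obtain ⟨m, hm1, hm2, hm3⟩ := exists_rep (P := P) (C := C) (j := j) hP0
  obtain ⟨m', hm'1, hm'2, hm'3⟩ := exists_rep (P := P) (C := C) (j := j + d) hP0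
  have ej : v[j]? = v[m]? :=
    perI_conn hP hP0 hj (hAC.trans hm1) (by omega) (by omega) hm3.symm
  have ejd : v[j + d]? = v[m']? :=
    perI_conn hP hP0 (by omega) (hAC.trans hm'1) (by omega) (by omega) hm'3.symm
  have hmd : (m + d) % P = m' % P := by
    calc (m + d) % P = (m % P + d % P) % P := by rw [Nat.add_mod]
    _ = (j % P + d % P) % P := by rw [hm3]
    _ = (j + d) % P := by rw [← Nat.add_mod]
    _ = m' % P := hm'3.symm
  have hmm' : v[m]? = v[m']? := by
    by_cases hc : m + d < C + P
    · have heq : m + d = m' := eq_of_mod_window hP0 (by omega) hc hm'1 hm'2 hmd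
      have := hd m hm1 (by omega)
      rwa [heq] at this
    · have heq : m + d - P = m' := by
        apply eq_of_mod_window hP0 (by omega) (by omega) hm'1 hm'2
        have hix : m + d - P + P = m + d := by omega
        calc (m + d - P) % P = (m + d - P + P) % P := by rw [Nat.add_mod_right]
        _ = (m + d) % P := by rw [hix]
        _ = m' % P := hmd
      obtain ⟨c, hc2⟩ := hdP
      rcases c with _ | c'
      · omega
      · have hmul : d * (c' + 1) = c' * d + d := by ring
        have hstep : m' + c' * d = m := by omega
        have h1 : v[m']? = v[m' + c' * d]? := perI_step hd c' m' hm'1 (by omega)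
        rw [hstep] at h1
        exact h1.symm
  exact ej.trans (hmm'.trans ejd.symm)

end StmtSix
namespace StmtSix
variable {α : Type*}

theorem gcd_sub_aux {P Q : ℕ} (hPQ : P < Q) : Nat.gcd P (Q - P) = Nat.gcd P Q := by
  apply Nat.dvd_antisymm
  · apply Nat.dvd_gcd (Nat.gcd_dvd_left _ _)
    have h1 := Nat.gcd_dvd_left P (Q - P)
    have h2 := Nat.gcd_dvd_right P (Q - P)
    have h3 : Nat.gcd P (Q - P) ∣ (Q - P) + P := Nat.dvd_add h2 h1
    rwa [show Q - P + P = Q by omega] at h3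
  · apply Nat.dvd_gcd (Nat.gcd_dvd_left _ _)
    exact Nat.dvd_sub (Nat.gcd_dvd_right P Q) (Nat.gcd_dvd_left P Q)

theorem perI_fw_key {v : List α} :
    ∀ (N : ℕ) {P Q a e : ℕ}, P + Q ≤ N → 0 < P → P < Q → P + Q ≤ e + 1 - a →
      PerI v a e P → PerI v a e Q → PerI v a e (Nat.gcd P Q) := by
  intro N
  induction N with
  | zero => intro P Q a e hN hP0 _ _ _ _; exact absurd hN (by omega)
  | succ N ih =>
    intro P Q a e hN hP0 hPQ hlen hP hQ
    have hae : a + P + Q ≤ e + 1 := by omega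
    set Q' := Q - P with hQ'def
    have hQ'0 : 0 < Q' := by omega
    have hgcd : Nat.gcd P Q' = Nat.gcd P Q := gcd_sub_aux hPQ
    have hP' : PerI v a (e - P) P := perI_mono hP le_rfl (by omega)
    have hQ'per : PerI v a (e - P) Q' := by
      intro j hj hje
      have e1 : v[j]? = v[j + Q]? := hQ j hj (by omega)
      have e2 : v[j + Q']? = v[j + Q' + P]? := hP (j + Q') (by omega) (by omega)
      have e3 : j + Q' + P = j + Q := by omega
      rw [e3] at e2
      exact e1.trans e2.symm
    have hlen' : P + Q' ≤ (e - P) + 1 - a := by omega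
    have hGper' : PerI v a (e - P) (Nat.gcd P Q) := by
      rcases Nat.lt_trichotomy P Q' with h | h | h
      · have := ih (by omega) hP0 h hlen' hP' hQ'per
        rwa [hgcd] at this
      · have hg : Nat.gcd P Q = P := by rw [← hgcd, ← h, Nat.gcd_self]
        rw [hg]; exact hP'
      · have := ih (by omega) hQ'0 h (by omega) hQ'per hP'
        rwa [Nat.gcd_comm Q' P, hgcd] at this
    have hGdvdP : Nat.gcd P Q ∣ P := Nat.gcd_dvd_left _ _
    have hGdvdQ' : Nat.gcd P Q ∣ Q' := by rw [← hgcd]; exact Nat.gcd_dvd_right _ _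
    have hGle : Nat.gcd P Q ≤ Q' := Nat.le_of_dvd hQ'0 hGdvdQ'
    intro j hj hje
    by_cases hc : j + Nat.gcd P Q ≤ e - P
    · exact hGper' j hj hc
    · have h1 : a ≤ j - P := by omega
      have e1 : v[j - P]? = v[j - P + P]? := hP _ h1 (by omega)
      have e2 : v[j - P]? = v[j - P + Nat.gcd P Q]? := hGper' _ h1 (by omega)
      have e3 : v[j - P + Nat.gcd P Q]? = v[j - P + Nat.gcd P Q + P]? :=
        hP _ (by omega) (by omega)
      have i1 : j - P + P = j := by omega
      have i2 : j - P + Nat.gcd P Q + P = j + Nat.gcd P Q := by omega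
      rw [i1] at e1
      rw [i2] at e3
      exact e1.symm.trans (e2.trans e3)

theorem perI_fw {v : List α} {P Q a e : ℕ} (hP0 : 0 < P) (hQ0 : 0 < Q)
    (hlen : P + Q ≤ e + 1 - a) (hP : PerI v a e P) (hQ : PerI v a e Q) :
    PerI v a e (Nat.gcd P Q) := by
  rcases Nat.lt_trichotomy P Q with h | h | h
  · exact perI_fw_key (P + Q) le_rfl hP0 h hlen hP hQ
  · subst h; rw [Nat.gcd_self]; exact hP
  · have := perI_fw_key (Q + P) le_rfl hQ0 h (by omega) hQ hP
    rwa [Nat.gcd_comm] at this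

end StmtSix
namespace StmtSix
variable {α : Type*}

theorem frag_length {v : List α} {a b : ℕ} (h1 : a ≤ b) (h2 : b < v.length) :
    (frag v a b).length = b + 1 - a := by
  simp [frag]
  omega

theorem frag_getElem? {v : List α} {a b m : ℕ} (hm : m < b + 1 - a) :
    (frag v a b)[m]? = v[a + m]? := by
  unfold frag
  rw [List.getElem?_take, if_pos hm, List.getElem?_drop]

theorem hasPeriod_iff_perI {v : List α} {a b : ℕ} (h1 : a ≤ b) (h2 : b < v.length)
    (P : ℕ) : HasPeriod (frag v a b) P ↔ PerI v a b P := by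
  constructor
  · intro h j hj hje
    have hm : (j - a) + P < (frag v a b).length := by rw [frag_length h1 h2]; omega
    have := h (j - a) hm
    rw [frag_getElem? (by omega), frag_getElem? (by omega)] at this
    have i1 : a + (j - a) = j := by omega
    have i2 : a + (j - a + P) = j + P := by omega
    rwa [i1, i2] at this
  · intro h m hm
    rw [frag_length h1 h2] at hm
    rw [frag_getElem? (by omega), frag_getElem? (by omega)]
    have := h (a + m) (by omega) (by omega)
    have i1 : a + m + P = a + (m + P) := by omega
    rwa [i1] at this

theorem minPeriod_spec {w : List α} (hw : 0 < w.length) :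
    0 < minPeriod w ∧ HasPeriod w (minPeriod w) := by
  have hne : {p | 0 < p ∧ HasPeriod w p}.Nonempty :=
    ⟨w.length, hw, fun i h => absurd h (by omega)⟩
  exact Nat.sInf_mem hne

theorem minPeriod_le {w : List α} {d : ℕ} (hd : 0 < d) (h : HasPeriod w d) :
    minPeriod w ≤ d := Nat.sInf_le ⟨hd, h⟩

/-- Two runs with the same (minimal) period `P` that both contain the interval
`[i, i+P]` coincide. -/
theorem run_eq {v : List α} {P i a₁ e₁ a₂ e₂ : ℕ} (hP0 : 0 < P)
    (h1 : PerI v a₁ e₁ P) (h2 : PerI v a₂ e₂ P)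
    (hl1 : a₁ = 0 ∨ v[a₁ - 1]? ≠ v[a₁ + P - 1]?)
    (hl2 : a₂ = 0 ∨ v[a₂ - 1]? ≠ v[a₂ + P - 1]?)
    (hr1 : e₁ = v.length - 1 ∨ v[e₁ + 1 - P]? ≠ v[e₁ + 1]?)
    (hr2 : e₂ = v.length - 1 ∨ v[e₂ + 1 - P]? ≠ v[e₂ + 1]?)
    (he1 : e₁ < v.length) (he2 : e₂ < v.length)
    (ha1 : a₁ ≤ i) (ha2 : a₂ ≤ i) (hie1 : i + P ≤ e₁) (hie2 : i + P ≤ e₂) :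
    a₁ = a₂ ∧ e₁ = e₂ := by
  have left : ∀ {a e a' : ℕ}, PerI v a e P →
      (a' = 0 ∨ v[a' - 1]? ≠ v[a' + P - 1]?) → a ≤ i → a' ≤ i → i + P ≤ e →
      ¬ (a < a') := by
    intro a e a' hper hmax ha ha' hie hlt
    rcases hmax with h0 | hneq
    · omega
    · have he : v[a' - 1]? = v[a' - 1 + P]? := hper (a' - 1) (by omega) (by omega)
      have hidx : a' + P - 1 = a' - 1 + P := by omega
      rw [hidx] at hneq
      exact hneq he
  have right : ∀ {a e e' : ℕ}, PerI v a e P →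
      (e' = v.length - 1 ∨ v[e' + 1 - P]? ≠ v[e' + 1]?) → a ≤ i → i + P ≤ e' →
      e < v.length → ¬ (e' < e) := by
    intro a e e' hper hmax ha hie' helen hlt
    rcases hmax with h0 | hneq
    · omega
    · have he : v[e' + 1 - P]? = v[e' + 1 - P + P]? :=
        hper (e' + 1 - P) (by omega) (by omega)
      have hidx : e' + 1 - P + P = e' + 1 := by omega
      rw [hidx] at he
      exact hneq he
  constructor
  · have n1 : ¬ (a₁ < a₂) := left h1 hl2 ha1 ha2 hie1
    have n2 : ¬ (a₂ < a₁) := left h2 hl1 ha2 ha1 hie2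
    omega
  · have n1 : ¬ (e₁ < e₂) := right h2 hr1 ha2 hie1 he2
    have n2 : ¬ (e₂ < e₁) := right h1 hr2 ha1 hie2 he1
    omega

end StmtSix
namespace StmtSix
variable {α : Type*}

/-- The heart of the argument: three fragments starting at `i` with minimal
periods `P < Q < R < n`, each of length `≥ n` and at least twice its period,
plus the run extending the `P`-fragment, give a contradiction. -/
theorem core {v : List α} {i n P Q R bP bQ bR aP eP : ℕ}
    (hbP : bP < v.length) (hbQ : bQ < v.length) (hbR : bR < v.length)
    (hPQ : P < Q) (hQR : Q < R) (hRn : R < n)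
    (hP0 : 0 < P)
    (hwP2 : i + 2 * P ≤ bP + 1) (hwQ2 : i + 2 * Q ≤ bQ + 1) (hwR2 : i + 2 * R ≤ bR + 1)
    (hwPn : i + n ≤ bP + 1) (hwQn : i + n ≤ bQ + 1) (hwRn : i + n ≤ bR + 1)
    (perP : PerI v i bP P) (perQ : PerI v i bQ Q) (perR : PerI v i bR R)
    (minP : ∀ d, 0 < d → PerI v i bP d → P ≤ d)
    (minQ : ∀ d, 0 < d → PerI v i bQ d → Q ≤ d)
    (haP : aP ≤ i) (hbeP : bP ≤ eP) (hePlen : eP < v.length)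
    (perRun : PerI v aP eP P)
    (hmaxR : eP = v.length - 1 ∨ v[eP + 1 - P]? ≠ v[eP + 1]?) : False := by
  have hQ0 : 0 < Q := by omega
  have hR0 : 0 < R := by omega
  have perRun' : PerI v i eP P := perI_mono perRun haP le_rfl
  rcases le_or_gt (P + Q) n with hcase1 | hn
  · -- Case I
    set G := Nat.gcd P Q with hG
    have perPn : PerI v i (i + n - 1) P := perI_mono perP le_rfl (by omega)
    have perQn : PerI v i (i + n - 1) Q := perI_mono perQ le_rfl (by omega)
    have hfw : PerI v i (i + n - 1) G := perI_fw hP0 hQ0 (by omega) perPn perQn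
    have hG0 : 0 < G := Nat.gcd_pos_of_pos_left _ hP0
    have hGQ : G ∣ Q := Nat.gcd_dvd_right _ _
    have hGle : G ≤ P := Nat.le_of_dvd hP0 (Nat.gcd_dvd_left _ _)
    have hwin : PerI v i (i + Q - 1) G := perI_mono hfw le_rfl (by omega)
    have hfull : PerI v i bQ G :=
      perI_prop hQ0 hG0 hGQ le_rfl (by omega) (by omega) perQ hwin
    have := minQ G hG0 hfull
    omega
  · set ρ := R - Q with hρdef
    have hρ : Q + ρ = R := by omega
    have hρ0 : 0 < ρ := by omega
    have hρP : ρ + 2 ≤ P := by omega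
    have Y : PerI v i (i + Q - 1) ρ := by
      intro j hj hje
      have e1 : v[j]? = v[j + R]? := perR j hj (by omega)
      have e2 : v[j + ρ]? = v[j + ρ + Q]? := perQ (j + ρ) (by omega) (by omega)
      have i1 : j + ρ + Q = j + R := by omega
      rw [i1] at e2
      exact e1.trans e2.symm
    rcases le_or_gt (2 * P) Q with hcase2 | h2PQ
    · -- Case II.a
      set G := Nat.gcd P ρ with hG
      have perP2 : PerI v i (i + 2 * P - 1) P := perI_mono perP le_rfl (by omega)
      have Y2 : PerI v i (i + 2 * P - 1) ρ := perI_mono Y le_rfl (by omega)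
      have hfw : PerI v i (i + 2 * P - 1) G := perI_fw hP0 hρ0 (by omega) perP2 Y2
      have hG0 : 0 < G := Nat.gcd_pos_of_pos_left _ hP0
      have hGP : G ∣ P := Nat.gcd_dvd_left _ _
      have hGle : G ≤ ρ := Nat.le_of_dvd hρ0 (Nat.gcd_dvd_right _ _)
      have hwin : PerI v i (i + P - 1) G := perI_mono hfw le_rfl (by omega)
      have hfull : PerI v i bP G :=
        perI_prop hP0 hG0 hGP le_rfl (by omega) (by omega) perP hwin
      have := minP G hG0 hfull
      omega
    · -- Case II.b
      set s := Q - P with hsdef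
      have hs : P + s = Q := by omega
      have hs0 : 0 < s := by omega
      have hsP : s < P := by omega
      have X : PerI v i (i + P - 1) s := by
        intro j hj hje
        have e1 : v[j]? = v[j + Q]? := perQ j hj (by omega)
        have e2 : v[j + s]? = v[j + s + P]? := perP (j + s) (by omega) (by omega)
        have i1 : j + s + P = j + Q := by omega
        rw [i1] at e2
        exact e1.trans e2.symm
      rcases le_or_gt ρ s with hρs | hsρ
      · -- Case II.b.i
        set G := Nat.gcd P ρ with hG
        have perPQ : PerI v i (i + Q - 1) P := perI_mono perP le_rfl (by omega)
        have hfw : PerI v i (i + Q - 1) G := perI_fw hP0 hρ0 (by omega) perPQ Y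
        have hG0 : 0 < G := Nat.gcd_pos_of_pos_left _ hP0
        have hGP : G ∣ P := Nat.gcd_dvd_left _ _
        have hGle : G ≤ ρ := Nat.le_of_dvd hρ0 (Nat.gcd_dvd_right _ _)
        have hwin : PerI v i (i + P - 1) G := perI_mono hfw le_rfl (by omega)
        have hfull : PerI v i bP G :=
          perI_prop hP0 hG0 hGP le_rfl (by omega) (by omega) perP hwin
        have := minP G hG0 hfull
        omega
      · -- Case II.b.ii : s < ρ
        rcases le_or_gt (i + P + Q) (eP + 1) with hbig | hsmall
        · -- run for P is long: kill Q via gcd(s, μ)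
          set μ := P - s with hμdef
          have hμ : s + μ = P := by omega
          have hμ0 : 0 < μ := by omega
          have M : PerI v i (i + P - 1) μ := by
            intro j hj hje
            have a1 : v[j]? = v[j + P]? := perRun' j hj (by omega)
            have a2 : v[j + P]? = v[j + P + P]? := perRun' (j + P) (by omega) (by omega)
            have a3 : v[j + μ]? = v[j + μ + Q]? := perQ (j + μ) (by omega) (by omega)
            have i1 : j + P + P = j + μ + Q := by omega
            rw [i1] at a2
            exact (a1.trans a2).trans a3.symm
          set G := Nat.gcd s μ with hG
          have hfw : PerI v i (i + P - 1) G := perI_fw hs0 hμ0 (by omega) X M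
          have hG0 : 0 < G := Nat.gcd_pos_of_pos_left _ hs0
          have hGs : G ∣ s := Nat.gcd_dvd_left _ _
          have hGμ : G ∣ μ := Nat.gcd_dvd_right _ _
          have hGP : G ∣ P := by
            have h := Nat.dvd_add hGs hGμ
            rwa [hμ] at h
          have hGQ : G ∣ Q := by
            have h := Nat.dvd_add hGP hGs
            rwa [hs] at h
          have hGle : G ≤ s := Nat.le_of_dvd hs0 hGs
          have perBig : PerI v i eP G :=
            perI_prop hP0 hG0 hGP le_rfl (by omega) (by omega) perRun' hfw
          have hwin : PerI v i (i + Q - 1) G := perI_mono perBig le_rfl (by omega)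
          have hfull : PerI v i bQ G :=
            perI_prop hQ0 hG0 hGQ le_rfl (by omega) (by omega) perQ hwin
          have := minQ G hG0 hfull
          omega
        · -- run for P is short: mismatch at its right end is contradictory
          have hePn : i + n - 1 ≤ eP := by omega
          have hePne : eP ≠ v.length - 1 := by
            intro h0
            omega
          have hne : v[eP + 1 - P]? ≠ v[eP + 1]? := hmaxR.resolve_left hePne
          set B := eP + 1 - Q with hBdef
          have hB1 : i + ρ + 1 ≤ B := by omega
          have hB2 : B ≤ i + P - 1 := by omega
          set C0 := B - ρ with hC0def
          have eq1 : v[B]? = v[B + Q]? := perQ B (by omega) (by omega)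
          have eq2 : v[C0]? = v[C0 + ρ]? := Y C0 (by omega) (by omega)
          have eq3 : v[C0 + s]? = v[C0 + s + ρ]? := Y (C0 + s) (by omega) (by omega)
          have eq4 : v[C0]? = v[C0 + s]? := X C0 (by omega) (by omega)
          have i1 : B + Q = eP + 1 := by omega
          have i2 : C0 + ρ = B := by omega
          have i3 : C0 + s + ρ = B + s := by omega
          have i4 : B + s = eP + 1 - P := by omega
          rw [i1] at eq1
          rw [i2] at eq2
          rw [i3, i4] at eq3
          exact hne (((eq3.symm.trans eq4.symm).trans eq2).trans eq1)

end StmtSix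

open StmtSix in
/-- if `u₁, u₂, u₃` are periodic fragments of `v` starting at the
same position `i`, each of length at least `2^k` and with shortest period less
than `2^k`, then the runs `run(u₁)`, `run(u₂)`, `run(u₃)` extending them cannot
be pairwise distinct. -/
theorem runs_of_periodic_prefixes_not_pairwise_distinct {α : Type*}
    (v : List α) (k i : ℕ) (b₁ b₂ b₃ : ℕ) (r₁ r₂ r₃ : ℕ × ℕ)
    -- the fragments u_t = v[i..b_t] are well-formed
    (hi₁ : i ≤ b₁) (hb₁ : b₁ < v.length)
    (hi₂ : i ≤ b₂) (hb₂ : b₂ < v.length)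
    (hi₃ : i ≤ b₃) (hb₃ : b₃ < v.length)
    -- each u_t is periodic
    (hper₁ : 2 * minPeriod (frag v i b₁) ≤ b₁ + 1 - i)
    (hper₂ : 2 * minPeriod (frag v i b₂) ≤ b₂ + 1 - i)
    (hper₃ : 2 * minPeriod (frag v i b₃) ≤ b₃ + 1 - i)
    -- each u_t has length at least 2^k
    (hlen₁ : 2 ^ k ≤ b₁ + 1 - i) (hlen₂ : 2 ^ k ≤ b₂ + 1 - i)
    (hlen₃ : 2 ^ k ≤ b₃ + 1 - i)
    -- each u_t has shortest period less than 2^k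
    (hp₁ : minPeriod (frag v i b₁) < 2 ^ k)
    (hp₂ : minPeriod (frag v i b₂) < 2 ^ k)
    (hp₃ : minPeriod (frag v i b₃) < 2 ^ k)
    -- r_t = run(u_t): the run containing u_t with the same shortest period
    (hr₁ : IsRun v r₁.1 r₁.2 ∧ r₁.1 ≤ i ∧ b₁ ≤ r₁.2 ∧
        minPeriod (frag v r₁.1 r₁.2) = minPeriod (frag v i b₁))
    (hr₂ : IsRun v r₂.1 r₂.2 ∧ r₂.1 ≤ i ∧ b₂ ≤ r₂.2 ∧
        minPeriod (frag v r₂.1 r₂.2) = minPeriod (frag v i b₂))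
    (hr₃ : IsRun v r₃.1 r₃.2 ∧ r₃.1 ≤ i ∧ b₃ ≤ r₃.2 ∧
        minPeriod (frag v r₃.1 r₃.2) = minPeriod (frag v i b₃)) :
    ¬(r₁ ≠ r₂ ∧ r₁ ≠ r₃ ∧ r₂ ≠ r₃) := by
  rintro ⟨h12, h13, h23⟩
  set P₁ := minPeriod (frag v i b₁) with hP₁def
  set P₂ := minPeriod (frag v i b₂) with hP₂def
  set P₃ := minPeriod (frag v i b₃) with hP₃def
  -- fragment data
  have hfl₁ : 0 < (frag v i b₁).length := by rw [frag_length hi₁ hb₁]; omega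
  have hfl₂ : 0 < (frag v i b₂).length := by rw [frag_length hi₂ hb₂]; omega
  have hfl₃ : 0 < (frag v i b₃).length := by rw [frag_length hi₃ hb₃]; omega
  obtain ⟨hP₁0, hHM₁⟩ : 0 < P₁ ∧ HasPeriod (frag v i b₁) P₁ := minPeriod_spec hfl₁
  obtain ⟨hP₂0, hHM₂⟩ : 0 < P₂ ∧ HasPeriod (frag v i b₂) P₂ := minPeriod_spec hfl₂
  obtain ⟨hP₃0, hHM₃⟩ : 0 < P₃ ∧ HasPeriod (frag v i b₃) P₃ := minPeriod_spec hfl₃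
  have per₁ : PerI v i b₁ P₁ := (hasPeriod_iff_perI hi₁ hb₁ _).mp hHM₁
  have per₂ : PerI v i b₂ P₂ := (hasPeriod_iff_perI hi₂ hb₂ _).mp hHM₂
  have per₃ : PerI v i b₃ P₃ := (hasPeriod_iff_perI hi₃ hb₃ _).mp hHM₃
  have min₁ : ∀ d, 0 < d → PerI v i b₁ d → P₁ ≤ d := fun d hd hper =>
    minPeriod_le hd ((hasPeriod_iff_perI hi₁ hb₁ d).mpr hper)
  have min₂ : ∀ d, 0 < d → PerI v i b₂ d → P₂ ≤ d := fun d hd hper =>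
    minPeriod_le hd ((hasPeriod_iff_perI hi₂ hb₂ d).mpr hper)
  have min₃ : ∀ d, 0 < d → PerI v i b₃ d → P₃ ≤ d := fun d hd hper =>
    minPeriod_le hd ((hasPeriod_iff_perI hi₃ hb₃ d).mpr hper)
  have hw₁2 : i + 2 * P₁ ≤ b₁ + 1 := by omega
  have hw₂2 : i + 2 * P₂ ≤ b₂ + 1 := by omega
  have hw₃2 : i + 2 * P₃ ≤ b₃ + 1 := by omega
  have hw₁n : i + 2 ^ k ≤ b₁ + 1 := by omega
  have hw₂n : i + 2 ^ k ≤ b₂ + 1 := by omega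
  have hw₃n : i + 2 ^ k ≤ b₃ + 1 := by omega
  -- run data
  obtain ⟨⟨hrao₁, hrel₁, hr2p₁, hrmL₁, hrmR₁⟩, hrai₁, hrbe₁, hrpe₁⟩ := hr₁
  obtain ⟨⟨hrao₂, hrel₂, hr2p₂, hrmL₂, hrmR₂⟩, hrai₂, hrbe₂, hrpe₂⟩ := hr₂
  obtain ⟨⟨hrao₃, hrel₃, hr2p₃, hrmL₃, hrmR₃⟩, hrai₃, hrbe₃, hrpe₃⟩ := hr₃
  have hfr₁ : 0 < (frag v r₁.1 r₁.2).length := by rw [frag_length hrao₁ hrel₁]; omega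
  have hfr₂ : 0 < (frag v r₂.1 r₂.2).length := by rw [frag_length hrao₂ hrel₂]; omega
  have hfr₃ : 0 < (frag v r₃.1 r₃.2).length := by rw [frag_length hrao₃ hrel₃]; omega
  have perR₁ : PerI v r₁.1 r₁.2 P₁ := by
    have h := (hasPeriod_iff_perI hrao₁ hrel₁ _).mp (minPeriod_spec hfr₁).2
    rwa [hrpe₁] at h
  have perR₂ : PerI v r₂.1 r₂.2 P₂ := by
    have h := (hasPeriod_iff_perI hrao₂ hrel₂ _).mp (minPeriod_spec hfr₂).2
    rwa [hrpe₂] at h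
  have perR₃ : PerI v r₃.1 r₃.2 P₃ := by
    have h := (hasPeriod_iff_perI hrao₃ hrel₃ _).mp (minPeriod_spec hfr₃).2
    rwa [hrpe₃] at h
  rw [hrpe₁] at hrmL₁ hrmR₁
  rw [hrpe₂] at hrmL₂ hrmR₂
  rw [hrpe₃] at hrmL₃ hrmR₃
  -- pairwise distinct minimal periods
  have key12 : P₁ = P₂ → False := by
    intro h
    apply h12
    have hie1 : i + P₁ ≤ r₁.2 := by omega
    have hie2 : i + P₁ ≤ r₂.2 := by omega
    rw [← h] at perR₂ hrmL₂ hrmR₂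
    obtain ⟨hae, hee⟩ := run_eq hP₁0 perR₁ perR₂ hrmL₁ hrmL₂ hrmR₁ hrmR₂
      hrel₁ hrel₂ hrai₁ hrai₂ hie1 hie2
    exact Prod.ext hae hee
  have key13 : P₁ = P₃ → False := by
    intro h
    apply h13
    have hie1 : i + P₁ ≤ r₁.2 := by omega
    have hie3 : i + P₁ ≤ r₃.2 := by omega
    rw [← h] at perR₃ hrmL₃ hrmR₃
    obtain ⟨hae, hee⟩ := run_eq hP₁0 perR₁ perR₃ hrmL₁ hrmL₃ hrmR₁ hrmR₃
      hrel₁ hrel₃ hrai₁ hrai₃ hie1 hie3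
    exact Prod.ext hae hee
  have key23 : P₂ = P₃ → False := by
    intro h
    apply h23
    have hie2 : i + P₂ ≤ r₂.2 := by omega
    have hie3 : i + P₂ ≤ r₃.2 := by omega
    rw [← h] at perR₃ hrmL₃ hrmR₃
    obtain ⟨hae, hee⟩ := run_eq hP₂0 perR₂ perR₃ hrmL₂ hrmL₃ hrmR₂ hrmR₃
      hrel₂ hrel₃ hrai₂ hrai₃ hie2 hie3
    exact Prod.ext hae hee
  rcases Nat.lt_trichotomy P₁ P₂ with a | a | a
  · rcases Nat.lt_trichotomy P₂ P₃ with b | b | b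
    · exact core hb₁ hb₂ hb₃ a b hp₃ hP₁0 hw₁2 hw₂2 hw₃2 hw₁n hw₂n hw₃n
        per₁ per₂ per₃ min₁ min₂ hrai₁ hrbe₁ hrel₁ perR₁ hrmR₁
    · exact key23 b
    · rcases Nat.lt_trichotomy P₁ P₃ with c | c | c
      · exact core hb₁ hb₃ hb₂ c b hp₂ hP₁0 hw₁2 hw₃2 hw₂2 hw₁n hw₃n hw₂n
          per₁ per₃ per₂ min₁ min₃ hrai₁ hrbe₁ hrel₁ perR₁ hrmR₁
      · exact key13 c
      · exact core hb₃ hb₁ hb₂ c a hp₂ hP₃0 hw₃2 hw₁2 hw₂2 hw₃n hw₁n hw₂n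
          per₃ per₁ per₂ min₃ min₁ hrai₃ hrbe₃ hrel₃ perR₃ hrmR₃
  · exact key12 a
  · rcases Nat.lt_trichotomy P₁ P₃ with b | b | b
    · exact core hb₂ hb₁ hb₃ a b hp₃ hP₂0 hw₂2 hw₁2 hw₃2 hw₂n hw₁n hw₃n
        per₂ per₁ per₃ min₂ min₁ hrai₂ hrbe₂ hrel₂ perR₂ hrmR₂
    · exact key13 b
    · rcases Nat.lt_trichotomy P₂ P₃ with c | c | c
      · exact core hb₂ hb₃ hb₁ c b hp₁ hP₂0 hw₂2 hw₃2 hw₁2 hw₂n hw₃n hw₁n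
          per₂ per₃ per₁ min₂ min₃ hrai₂ hrbe₂ hrel₂ perR₂ hrmR₂
      · exact key23 c
      · exact core hb₃ hb₂ hb₁ c a hp₁ hP₃0 hw₃2 hw₂2 hw₁2 hw₃n hw₂n hw₁n
          per₃ per₂ per₁ min₃ min₂ hrai₃ hrbe₃ hrel₃ perR₃ hrmR₃
end

section
/- Let x and y be periodic words over a linearly ordered alphabet with the same Lyndon root λ, with |x| ≤ |y|, and with Lyndon representations (p, e, s) of x and (p', e', s') of y. Then for every position i with 1 ≤ i ≤ |y| − |x| + 1, the word x occurs in y at position i if and only if i ≡ p' − p + 1 (mod |λ|). In particular, the set of positions at which x occurs in y is an arithmetic progression with common difference |λ|. -/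
/-- The left rotation of `l` by `i`: `l[i+1..|l|] l[1..i]` (1-indexed). -/
def rotL {α : Type*} (l : List α) (i : ℕ) : List α := l.drop i ++ l.take i

/-- `y` is a cyclic rotation of `x`. -/
def IsCyclicRotation {α : Type*} (x y : List α) : Prop := ∃ i ≤ x.length, y = rotL x i

/-- `w` is primitive: `per(w)` is not a proper divisor of `|w|`. -/
def PrimitiveWord {α : Type*} (w : List α) : Prop :=
  ¬(minPeriod w ∣ w.length ∧ minPeriod w < w.length)

/-- A Lyndon word: nonempty, primitive, and lexicographically minimal among
its cyclic rotations. -/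
def IsLyndon {α : Type*} [LinearOrder α] (w : List α) : Prop :=
  w ≠ [] ∧ PrimitiveWord w ∧ ∀ i ≤ w.length, w ≤ rotL w i

/-- `λ^e`: the `e`-fold concatenation of `l`. -/
def listPow {α : Type*} (l : List α) (e : ℕ) : List α := (List.replicate e l).flatten

section Aux
variable {α : Type*}

lemma hasPeriod_length (w : List α) : HasPeriod w w.length := fun i h => absurd h (by omega)

lemma periodSet_nonempty (w : List α) (hw : w ≠ []) :
    {p | 0 < p ∧ HasPeriod w p}.Nonempty :=
  ⟨w.length, List.length_pos_iff.mpr hw, hasPeriod_length w⟩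

lemma minPeriod_pos (w : List α) (hw : w ≠ []) : 0 < minPeriod w :=
  (Nat.sInf_mem (periodSet_nonempty w hw)).1

lemma minPeriod_hasPeriod (w : List α) (hw : w ≠ []) : HasPeriod w (minPeriod w) :=
  (Nat.sInf_mem (periodSet_nonempty w hw)).2

lemma minPeriod_le (w : List α) {p : ℕ} (hp : 0 < p) (h : HasPeriod w p) : minPeriod w ≤ p :=
  Nat.sInf_le ⟨hp, h⟩

lemma minPeriod_le_length (w : List α) (hw : w ≠ []) : minPeriod w ≤ w.length :=
  minPeriod_le w (List.length_pos_iff.mpr hw) (hasPeriod_length w)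

lemma listPow_length (l : List α) (e : ℕ) : (listPow l e).length = e * l.length := by
  induction e with
  | zero => simp [listPow]
  | succ e ih =>
    have : listPow l (e+1) = l ++ listPow l e := by simp [listPow, List.replicate_succ]
    rw [this]
    simp [ih, Nat.succ_mul]
    omega

lemma listPow_getElem? (l : List α) (e k : ℕ) (hk : k < e * l.length) :
    (listPow l e)[k]? = l[k % l.length]? := by
  induction e generalizing k with
  | zero => omega
  | succ e ih =>
    rw [Nat.succ_mul] at hk
    have hrw : listPow l (e+1) = l ++ listPow l e := by simp [listPow, List.replicate_succ]
    rw [hrw]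
    by_cases h : k < l.length
    · rw [List.getElem?_append_left h, Nat.mod_eq_of_lt h]
    · push_neg at h
      rw [List.getElem?_append_right h, ih (k - l.length) (by omega)]
      congr 1
      have : k = l.length + (k - l.length) := by omega
      rw [this, Nat.add_sub_cancel_left, Nat.add_mod_left]

/-- Master indexing lemma: a word of the form `s ++ lam^e ++ p` reads letters
of `lam` cyclically, with offset `|lam| - |s|`. -/
lemma struct_getElem? (lam s p : List α) (e j : ℕ)
    (hs : s <:+ lam) (hsl : s.length < lam.length)
    (hp : p <+: lam) (hpl : p.length < lam.length)
    (hj : j < (s ++ listPow lam e ++ p).length) :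
    (s ++ listPow lam e ++ p)[j]? = lam[(j + (lam.length - s.length)) % lam.length]? := by
  have hPE : (listPow lam e).length = e * lam.length := listPow_length lam e
  have hSP : (s ++ listPow lam e).length = s.length + e * lam.length := by
    simp [hPE]
  have hlen : (s ++ listPow lam e ++ p).length = s.length + e * lam.length + p.length := by
    simp [hPE]; omega
  rw [hlen] at hj
  by_cases h1 : j < s.length
  · rw [List.getElem?_append_left (by omega : j < (s ++ listPow lam e).length),
      List.getElem?_append_left h1]
    obtain ⟨t, ht⟩ := hs
    have htl : t.length = lam.length - s.length := by
      have := congrArg List.length ht; simp at this; omega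
    have hmod : (j + (lam.length - s.length)) % lam.length
        = j + (lam.length - s.length) := Nat.mod_eq_of_lt (by omega)
    rw [hmod, show j + (lam.length - s.length) = t.length + j by omega,
      ← ht, List.getElem?_append_right (by omega)]
    congr 1; omega
  · push_neg at h1
    by_cases h2 : j - s.length < e * lam.length
    · rw [List.getElem?_append_left (by omega : j < (s ++ listPow lam e).length),
        List.getElem?_append_right h1, listPow_getElem? lam e _ (by omega)]
      congr 1
      have : j + (lam.length - s.length) = (j - s.length) + lam.length := by omega
      rw [this, Nat.add_mod_right]
    · push_neg at h2
      rw [List.getElem?_append_right (by omega : (s ++ listPow lam e).length ≤ j), hSP]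
      set k := j - (s.length + e * lam.length) with hk
      have hkp : k < p.length := by omega
      obtain ⟨t, ht⟩ := hp
      have hidx : j + (lam.length - s.length) = k + lam.length + e * lam.length := by omega
      rw [hidx, Nat.add_mul_mod_self_right, Nat.add_mod_right, Nat.mod_eq_of_lt (by omega),
        ← ht, List.getElem?_append_left hkp]

lemma occursAt_iff_getElem? (x y : List α) (i : ℕ) (h : i + x.length ≤ y.length) :
    OccursAt x y i ↔ ∀ t < x.length, x[t]? = y[i + t]? := by
  constructor
  · rintro ⟨t, ht⟩ u hu
    rw [← List.getElem?_drop, ← ht, List.getElem?_append_left hu]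
  · intro hall
    rw [OccursAt, List.prefix_iff_eq_take]
    apply List.ext_getElem?
    intro n
    by_cases hn : n < x.length
    · rw [List.getElem?_take, if_pos hn, List.getElem?_drop, hall n hn]
    · push_neg at hn
      rw [List.getElem?_eq_none hn, List.getElem?_eq_none]
      simp only [List.length_take, List.length_drop]
      omega

lemma occursAt_length_le {x y : List α} {i : ℕ} (hx : x ≠ []) (h : OccursAt x y i) :
    i + x.length ≤ y.length := by
  have := h.length_le
  simp only [List.length_drop] at this
  have : 0 < x.length := List.length_pos_iff.mpr hx
  omega

/-- subtract step for periods -/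
lemma hasPeriod_sub (w : List α) (p q : ℕ) (hq : 0 < q) (hqp : q ≤ p)
    (hP : HasPeriod w p) (hQ : HasPeriod w q) (hn : p + q ≤ w.length) :
    HasPeriod w (p - q) := by
  intro i hi
  by_cases h : i + p < w.length
  · have h1 := hP i h
    have h2 := hQ (i + (p - q)) (by omega)
    rw [show i + (p - q) + q = i + p by omega] at h2
    rw [h1, h2]
  · have hiq : q ≤ i := by omega
    have h1 := hQ (i - q) (by omega)
    have h2 := hP (i - q) (by omega)
    rw [show i - q + q = i by omega] at h1
    rw [show i - q + p = i + (p - q) by omega] at h2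
    rw [← h1, h2]

lemma hasPeriod_gcd (w : List α) : ∀ n p q, p + q ≤ n → p + q ≤ w.length →
    HasPeriod w p → HasPeriod w q → HasPeriod w (Nat.gcd p q) := by
  intro n
  induction n with
  | zero =>
    intro p q h _ hp hq
    have h1 : p = 0 := by omega
    have h2 : q = 0 := by omega
    subst h1; subst h2; simpa using hp
  | succ n ih =>
    intro p q hn hw hp hq
    rcases Nat.eq_zero_or_pos p with hp0 | hp0
    · rw [hp0]; simpa using hq
    rcases Nat.eq_zero_or_pos q with hq0 | hq0
    · rw [hq0]; simpa using hp
    rcases le_total q p with hle | hle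
    · rcases Nat.eq_or_lt_of_le hle with heq | hlt
      · rw [heq, Nat.gcd_self]; exact hp
      · have hsub := hasPeriod_sub w p q hq0 hle hp hq hw
        rw [← Nat.gcd_sub_self_left hle]
        exact ih (p - q) q (by omega) (by omega) hsub hq
    · rcases Nat.eq_or_lt_of_le hle with heq | hlt
      · rw [← heq, Nat.gcd_self]; exact hp
      · have hsub := hasPeriod_sub w q p hp0 hle hq hp (by omega)
        have : Nat.gcd p (q - p) = Nat.gcd p q := Nat.gcd_sub_self_right hle
        rw [← this]
        exact ih p (q - p) (by omega) (by omega) hp hsub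

lemma exists_mul_mod_gcd (c L : ℕ) (hL : 0 < L) :
    ∃ k : ℕ, (k * c) % L = Nat.gcd c L % L := by
  have hLz : ((L:ℤ)) ≠ 0 := by exact_mod_cast hL.ne'
  set a : ℤ := Nat.gcdA c L with ha
  have hnn : 0 ≤ a % (L : ℤ) := Int.emod_nonneg a hLz
  refine ⟨(a % (L : ℤ)).toNat, ?_⟩
  have key : (((a % (L:ℤ)).toNat : ℤ) * c) % L = ((Nat.gcd c L : ℤ)) % L := by
    rw [Int.toNat_of_nonneg hnn, Int.mul_emod, Int.emod_emod_of_dvd _ dvd_rfl, ← Int.mul_emod]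
    have hb : (Nat.gcd c L : ℤ) = a * c + (L:ℤ) * Nat.gcdB c L := by
      rw [Nat.gcd_eq_gcd_ab]; ring
    rw [hb, Int.add_mul_emod_self_left]
  have h2 : ((((a % (L:ℤ)).toNat * c) % L : ℕ) : ℤ) = (((Nat.gcd c L) % L : ℕ) : ℤ) := by
    rw [Int.natCast_mod, Int.natCast_mod]
    push_cast
    exact key
  exact_mod_cast h2

lemma no_rot_fix (lam : List α) (hprim : PrimitiveWord lam) (hne : lam ≠ [])
    (c : ℕ) (hc0 : 0 < c) (hcL : c < lam.length)
    (hfix : ∀ j < lam.length, lam[j]? = lam[(j + c) % lam.length]?) : False := by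
  set L := lam.length with hLdef
  have hL : 0 < L := List.length_pos_iff.mpr hne
  -- iterate the fixing rotation
  have hiter : ∀ k : ℕ, ∀ j < L, lam[j]? = lam[(j + k * c) % L]? := by
    intro k
    induction k with
    | zero => intro j hj; rw [Nat.zero_mul, Nat.add_zero, Nat.mod_eq_of_lt hj]
    | succ k ih =>
      intro j hj
      have h1 := ih j hj
      have h2 := hfix ((j + k * c) % L) (Nat.mod_lt _ hL)
      rw [Nat.mod_add_mod] at h2
      rw [h1, h2]
      congr 1
      rw [Nat.succ_mul]
      ring_nf
  set g := Nat.gcd c L with hg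
  have hgpos : 0 < g := Nat.gcd_pos_of_pos_left _ hc0
  have hgc : g ≤ c := Nat.le_of_dvd hc0 (Nat.gcd_dvd_left c L)
  have hgL : g ∣ L := Nat.gcd_dvd_right c L
  obtain ⟨k, hk⟩ := exists_mul_mod_gcd c L hL
  have hgfix : ∀ j < L, lam[j]? = lam[(j + g) % L]? := by
    intro j hj
    have := hiter k j hj
    rw [← Nat.add_mod_mod, hk, Nat.mod_eq_of_lt (by omega : g < L)] at this
    exact this
  have hper : HasPeriod lam g := by
    intro i hi
    have := hgfix i (by omega)
    rwa [Nat.mod_eq_of_lt (by omega)] at this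
  -- 2g ≤ L
  have h2g : 2 * g ≤ L := by
    obtain ⟨m, hm⟩ := hgL
    have : 2 ≤ m := by
      rcases Nat.lt_or_ge m 2 with h | h
      · interval_cases m <;> omega
      · exact h
    calc 2 * g ≤ m * g := Nat.mul_le_mul_right g this
      _ = L := by rw [hm]; ring
  set p := minPeriod lam with hp
  have hppos : 0 < p := minPeriod_pos lam hne
  have hpper : HasPeriod lam p := minPeriod_hasPeriod lam hne
  have hpg : p ≤ g := minPeriod_le lam hgpos hper
  have hgcdper : HasPeriod lam (Nat.gcd p g) :=
    hasPeriod_gcd lam (p + g) p g le_rfl (by omega) hpper hper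
  have hgcdpos : 0 < Nat.gcd p g := Nat.gcd_pos_of_pos_left _ hppos
  have h1 : p ≤ Nat.gcd p g := minPeriod_le lam hgcdpos hgcdper
  have h2 : Nat.gcd p g ≤ p := Nat.le_of_dvd hppos (Nat.gcd_dvd_left p g)
  have heq : Nat.gcd p g = p := le_antisymm h2 h1
  have hpdvd : p ∣ L := dvd_trans (heq ▸ Nat.gcd_dvd_right p g) hgL
  exact hprim ⟨hpdvd, by omega⟩

lemma natCast_modEq_iff (a b n : ℕ) : ((a:ℤ) ≡ (b:ℤ) [ZMOD (n:ℤ)]) ↔ a % n = b % n := by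
  unfold Int.ModEq
  rw [← Int.natCast_mod, ← Int.natCast_mod]
  exact Int.natCast_inj

lemma rot_agree_eq (lam : List α) (hprim : PrimitiveWord lam) (hne : lam ≠ [])
    (a b : ℕ) (ha : a < lam.length) (hb : b < lam.length)
    (h : ∀ t < lam.length, lam[(t + a) % lam.length]? = lam[(t + b) % lam.length]?) :
    a = b := by
  set L := lam.length with hLdef
  have hL : 0 < L := by omega
  set c := ((L - a) + b) % L with hc
  have hfix : ∀ j < L, lam[j]? = lam[(j + c) % L]? := by
    intro j hj
    have ht := h ((j + (L - a)) % L) (Nat.mod_lt _ hL)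
    rw [Nat.mod_add_mod, Nat.mod_add_mod] at ht
    rw [show j + (L - a) + a = j + L by omega, Nat.add_mod_right, Nat.mod_eq_of_lt hj] at ht
    rw [show j + (L - a) + b = j + ((L - a) + b) by omega] at ht
    rw [hc, Nat.add_mod_mod]
    exact ht
  by_cases hc0 : c = 0
  · have hdvd : L ∣ (L - a) + b := Nat.dvd_of_mod_eq_zero (by rw [← hc]; exact hc0)
    obtain ⟨m, hm⟩ := hdvd
    rcases Nat.lt_or_ge m 2 with h2 | h2
    · interval_cases m <;> omega
    · have hmul : L * 2 ≤ L * m := Nat.mul_le_mul_left L h2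
      omega
  · exact absurd (no_rot_fix lam hprim hne c (by omega) (Nat.mod_lt _ hL) hfix) id

end Aux

/-- if `x` and `y` are periodic words with common Lyndon root `lam`,
`|x| ≤ |y|`, and Lyndon representations `(p,e,s)`, `(p',e',s')`, then `x` occurs
in `y` at a (1-indexed) position `i` iff `i ≡ p' − p + 1 (mod |lam|)`; below
positions are 0-indexed, so the congruence reads `i ≡ p' − p (mod |lam|)`.
In particular, the occurrence positions form an arithmetic progression with
common difference `|lam|`. -/
theorem occurrences_with_common_lyndon_root {α : Type*} [LinearOrder α]
    (x y lam : List α) (xs xp ys yp : List α) (e e' : ℕ)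
    (hlen : x.length ≤ y.length)
    -- x and y are periodic
    (hxper : 2 * minPeriod x ≤ x.length) (hyper : 2 * minPeriod y ≤ y.length)
    -- lam is the common Lyndon root
    (hlyn : IsLyndon lam)
    (hrootx : IsCyclicRotation (x.take (minPeriod x)) lam)
    (hrooty : IsCyclicRotation (y.take (minPeriod y)) lam)
    -- Lyndon representation (p, e, s) of x, where p = |xs|, s = |xp|
    (hxrep : x = xs ++ listPow lam e ++ xp)
    (hxs : xs <:+ lam) (hxs' : xs ≠ lam) (hxp : xp <+: lam) (hxp' : xp ≠ lam)
    -- Lyndon representation (p', e', s') of y, where p' = |ys|, s' = |yp|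
    (hyrep : y = ys ++ listPow lam e' ++ yp)
    (hys : ys <:+ lam) (hys' : ys ≠ lam) (hyp : yp <+: lam) (hyp' : yp ≠ lam) :
    (∀ i : ℕ, i + x.length ≤ y.length →
      (OccursAt x y i ↔ (i : ℤ) ≡ (ys.length : ℤ) - (xs.length : ℤ) [ZMOD (lam.length : ℤ)])) ∧
    (∃ a m : ℕ, {i | OccursAt x y i} = (fun t => a + t * lam.length) '' Set.Iio m) := by
  have hlamne : lam ≠ [] := hlyn.1
  have hL : 0 < lam.length := List.length_pos_iff.mpr hlamne
  have hxsl : xs.length < lam.length :=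
    lt_of_le_of_ne hxs.length_le (fun h => hxs' (hxs.eq_of_length h))
  have hysl : ys.length < lam.length :=
    lt_of_le_of_ne hys.length_le (fun h => hys' (hys.eq_of_length h))
  have hxpl : xp.length < lam.length :=
    lt_of_le_of_ne hxp.length_le (fun h => hxp' (hxp.eq_of_length h))
  have hypl : yp.length < lam.length :=
    lt_of_le_of_ne hyp.length_le (fun h => hyp' (hyp.eq_of_length h))
  -- x and y read cyclically from lam
  have hxi : ∀ j < x.length, x[j]? = lam[(j + (lam.length - xs.length)) % lam.length]? := by
    intro j hj
    conv_lhs => rw [hxrep]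
    exact struct_getElem? lam xs xp e j hxs hxsl hxp hxpl (by rw [← hxrep]; exact hj)
  have hyi : ∀ j < y.length, y[j]? = lam[(j + (lam.length - ys.length)) % lam.length]? := by
    intro j hj
    conv_lhs => rw [hyrep]
    exact struct_getElem? lam ys yp e' j hys hysl hyp hypl (by rw [← hyrep]; exact hj)
  -- |x| ≥ 2·|lam|
  have hx2L : 2 * lam.length ≤ x.length := by
    obtain ⟨ix, hix, hlamx⟩ := hrootx
    have h1 : lam.length = min (minPeriod x) x.length := by
      rw [hlamx]; simp [rotL, List.length_take, List.length_drop]; omega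
    have hxlenpos : 0 < x.length := by omega
    have := minPeriod_le_length x (List.length_pos_iff.mp hxlenpos)
    have : minPeriod x = lam.length := by omega
    omega
  have hxne : x ≠ [] := List.length_pos_iff.mp (by omega)
  set L := lam.length with hLdef
  set offx := L - xs.length with hoffx
  set offy := L - ys.length with hoffy
  -- the main equivalence
  have hmain : ∀ i : ℕ, i + x.length ≤ y.length →
      (OccursAt x y i ↔ (i + offy) % L = offx % L) := by
    intro i hi
    rw [occursAt_iff_getElem? x y i hi]
    constructor
    · intro hall
      have hagree : ∀ t < L, lam[(t + offx % L) % L]? = lam[(t + (i + offy) % L) % L]? := by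
        intro t ht
        have h1 := hall t (by omega)
        rw [hxi t (by omega), hyi (i + t) (by omega)] at h1
        rw [Nat.add_mod_mod, Nat.add_mod_mod,
          show t + (i + offy) = i + t + offy by omega]
        exact h1
      exact (rot_agree_eq lam hlyn.2.1 hlamne _ _ (Nat.mod_lt _ hL) (Nat.mod_lt _ hL)
        hagree).symm
    · intro heq t ht
      rw [hxi t (by omega), hyi (i + t) (by omega)]
      have heq2 : (t + offx) % L = (i + t + offy) % L := by
        calc (t + offx) % L = (t + offx % L) % L := (Nat.add_mod_mod t offx L).symm
          _ = (t + (i + offy) % L) % L := by rw [heq]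
          _ = (t + (i + offy)) % L := Nat.add_mod_mod t (i + offy) L
          _ = (i + t + offy) % L := by congr 1; omega
      rw [heq2]
  -- translate the congruence
  have hofxeq : ((offx : ℕ) : ℤ) = (ys.length : ℤ) - (xs.length : ℤ) + ((offy : ℕ) : ℤ) := by
    rw [hoffx, hoffy]
    push_cast [Nat.cast_sub hxsl.le, Nat.cast_sub hysl.le]
    ring
  have hcong : ∀ i : ℕ,
      ((i : ℤ) ≡ (ys.length : ℤ) - (xs.length : ℤ) [ZMOD (L : ℤ)]) ↔
        (i + offy) % L = offx % L := by
    intro i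
    rw [← natCast_modEq_iff (i + offy) offx L]
    constructor
    · intro h
      have h2 := Int.ModEq.add_right (offy : ℤ) h
      rw [← hofxeq] at h2
      have hc : ((i : ℤ) + (offy:ℤ)) = ((i + offy : ℕ) : ℤ) := by push_cast; ring
      rwa [hc] at h2
    · intro h
      have h2 := Int.ModEq.sub_right (offy : ℤ) h
      have hc : ((i + offy : ℕ) : ℤ) - (offy:ℤ) = (i:ℤ) := by push_cast; ring
      have hc2 : ((offx : ℕ) : ℤ) - (offy:ℤ) = (ys.length : ℤ) - (xs.length : ℤ) := by
        rw [hofxeq]; ring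
      rwa [hc, hc2] at h2
  constructor
  · intro i hi
    exact (hmain i hi).trans (hcong i).symm
  -- Part 2: arithmetic progression
  set r := (ys.length + offx) % L with hr
  have hrlt : r < L := Nat.mod_lt _ hL
  have hiff2 : ∀ i : ℕ, (i + offy) % L = offx % L ↔ i % L = r := by
    intro i
    constructor
    · intro h
      have h1 : (i + offy + ys.length) % L = (offx + ys.length) % L := by
        conv_lhs => rw [← Nat.mod_add_mod]
        rw [h, Nat.mod_add_mod]
      rw [show i + offy + ys.length = i + L by omega, Nat.add_mod_right] at h1
      rw [h1, hr]
      congr 1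
      omega
    · intro h
      have h1 : (i + offy) % L = (r + offy) % L := by
        rw [← Nat.mod_add_mod, h, Nat.mod_add_mod]
      rw [h1, hr, Nat.mod_add_mod,
        show ys.length + offx + offy = offx + L by omega, Nat.add_mod_right]
  have hchar : ∀ i : ℕ, OccursAt x y i ↔ (i + x.length ≤ y.length ∧ i % L = r) := by
    intro i
    constructor
    · intro h
      have hb := occursAt_length_le hxne h
      exact ⟨hb, (hiff2 i).mp ((hmain i hb).mp h)⟩
    · rintro ⟨hb, hm⟩
      exact (hmain i hb).mpr ((hiff2 i).mpr hm)
  refine ⟨r, if r + x.length ≤ y.length then (y.length - x.length - r) / L + 1 else 0, ?_⟩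
  ext i
  simp only [Set.mem_setOf_eq, Set.mem_image, Set.mem_Iio]
  rw [hchar i]
  by_cases hcase : r + x.length ≤ y.length
  · rw [if_pos hcase]
    constructor
    · rintro ⟨hb, hm⟩
      have hri : r ≤ i := hm ▸ Nat.mod_le i L
      set q := i / L with hqdef
      have hq : i = L * q + r := by
        have hdm := Nat.div_add_mod i L
        rw [← hqdef] at hdm
        omega
      have hcomm : q * L = L * q := Nat.mul_comm q L
      refine ⟨q, ?_, by omega⟩
      have hdiv : (i - r) / L = q := by
        rw [show i - r = L * q by omega]
        exact Nat.mul_div_cancel_left q hL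
      have hqle : q ≤ (y.length - x.length - r) / L := by
        rw [← hdiv]
        exact Nat.div_le_div_right (by omega)
      omega
    · rintro ⟨t, ht, hti⟩
      have h1 : t * L ≤ ((y.length - x.length - r) / L) * L :=
        Nat.mul_le_mul_right L (by omega)
      have h2 : ((y.length - x.length - r) / L) * L ≤ y.length - x.length - r :=
        Nat.div_mul_le_self _ _
      constructor
      · omega
      · rw [← hti, Nat.add_mul_mod_self_right, Nat.mod_eq_of_lt hrlt]
  · rw [if_neg hcase]
    constructor
    · rintro ⟨hb, hm⟩
      have hri : r ≤ i := hm ▸ Nat.mod_le i L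
      omega
    · rintro ⟨t, ht, _⟩
      exact absurd ht (Nat.not_lt_zero t)
end

section
/- Let u and u' be words and q a positive integer with lcp(u, u') ≥ q. Let d be the length of the longest prefix of u that has period q, and let d' be the length of the longest prefix of u' that has period q. If d ≠ d', then lcp(u, u') = min(d, d'); otherwise lcp(u, u') ≥ d. -/
/-- `lcp(u, v)`: the length of the longest common prefix of `u` and `v`. -/
noncomputable def lcp {α : Type*} (u v : List α) : ℕ :=
  sSup {k | k ≤ u.length ∧ k ≤ v.length ∧ u.take k = v.take k}

/-- The length of the longest prefix of `u` that has period `q`. -/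
noncomputable def maxPeriodicPrefix {α : Type*} (u : List α) (q : ℕ) : ℕ :=
  sSup {d | d ≤ u.length ∧ HasPeriod (u.take d) q}

/-!
A prefix of length `m ≥ q` with period `q` is determined by its first `q` letters. Hence
if `d ≤ d'`, the length-`d` prefixes of `u` and `u'` are both `q`-periodic and share their
first `q` letters (as `q ≤ lcp u u'`), so they coincide and `d ≤ lcp u u'`. Conversely any
common prefix of `u` and `u'` that is `q`-periodic inside `u'` is `q`-periodic inside `u`,
so `min (lcp u u') d' ≤ d`, which forces `lcp u u' ≤ d` when `d < d'`.
-/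

section

variable {α : Type*}

theorem Nat.le_sSup_iff_mem_of_isLowerSet {S : Set ℕ} (hne : S.Nonempty) (hbdd : BddAbove S)
    (hS : IsLowerSet S) {k : ℕ} : k ≤ sSup S ↔ k ∈ S :=
  ⟨fun hk => hS hk (Nat.sSup_mem hne hbdd), fun hk => le_csSup hbdd hk⟩

theorem hasPeriod_of_length_le {w : List α} {p : ℕ} (h : w.length ≤ p) : HasPeriod w p :=
  fun i hi => absurd hi (by omega)

theorem HasPeriod.take {w : List α} {q : ℕ} (h : HasPeriod w q) (m : ℕ) :
    HasPeriod (w.take m) q := by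
  intro i hi
  rw [List.length_take, Nat.lt_min] at hi
  rw [List.getElem?_take_of_lt hi.1, List.getElem?_take_of_lt (by omega)]
  exact h i hi.2

theorem HasPeriod.getElem?_add_mul {w : List α} {q : ℕ} (h : HasPeriod w q) {i : ℕ} (k : ℕ)
    (hi : i + q * k < w.length) : w[i]? = w[i + q * k]? := by
  induction k with
  | zero => simp
  | succ k ih =>
    rw [Nat.mul_succ, ← Nat.add_assoc] at hi ⊢
    rw [ih (by omega)]
    exact h _ hi

theorem HasPeriod.getElem?_mod {w : List α} {q : ℕ} (h : HasPeriod w q) {i : ℕ}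
    (hi : i < w.length) : w[i % q]? = w[i]? := by
  conv_rhs => rw [← Nat.mod_add_div i q]
  exact h.getElem?_add_mul _ (by rwa [Nat.mod_add_div])

theorem HasPeriod.eq_of_take_eq {w v : List α} {q : ℕ} (hq : 0 < q)
    (hlen : w.length = v.length) (hw : HasPeriod w q) (hv : HasPeriod v q)
    (htake : w.take q = v.take q) : w = v := by
  refine List.ext_getElem? fun i => ?_
  rcases lt_or_ge i w.length with hi | hi
  · have hmod : i % q < q := Nat.mod_lt i hq
    rw [← hw.getElem?_mod hi, ← hv.getElem?_mod (hlen ▸ hi),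
      ← List.getElem?_take_of_lt hmod, htake, List.getElem?_take_of_lt hmod]
  · rw [List.getElem?_eq_none hi, List.getElem?_eq_none (hlen ▸ hi)]

theorem le_lcp_iff {u v : List α} {k : ℕ} :
    k ≤ lcp u v ↔ k ≤ u.length ∧ k ≤ v.length ∧ u.take k = v.take k := by
  refine Nat.le_sSup_iff_mem_of_isLowerSet ⟨0, by simp⟩ ⟨u.length, fun _ hk => hk.1⟩ ?_
  rintro b a hab ⟨hbu, hbv, htake⟩
  refine ⟨hab.trans hbu, hab.trans hbv, ?_⟩
  simpa [List.take_take, min_eq_left hab] using congrArg (List.take a) htake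

theorem le_maxPeriodicPrefix_iff {u : List α} {q d : ℕ} :
    d ≤ maxPeriodicPrefix u q ↔ d ≤ u.length ∧ HasPeriod (u.take d) q := by
  refine Nat.le_sSup_iff_mem_of_isLowerSet ⟨0, by simp [hasPeriod_of_length_le]⟩
    ⟨u.length, fun _ hk => hk.1⟩ ?_
  rintro b a hab ⟨hbu, hper⟩
  refine ⟨hab.trans hbu, ?_⟩
  simpa [List.take_take, min_eq_left hab] using hper.take a

theorem min_lcp_maxPeriodicPrefix_le (u v : List α) (q : ℕ) :
    min (lcp u v) (maxPeriodicPrefix v q) ≤ maxPeriodicPrefix u q := by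
  obtain ⟨hku, -, htake⟩ := le_lcp_iff.mp (min_le_left _ _)
  obtain ⟨-, hper⟩ := le_maxPeriodicPrefix_iff.mp (min_le_right _ _)
  exact le_maxPeriodicPrefix_iff.mpr ⟨hku, htake ▸ hper⟩

theorem maxPeriodicPrefix_le_lcp {u v : List α} {q : ℕ} (hq : 0 < q) (h : q ≤ lcp u v)
    (hle : maxPeriodicPrefix u q ≤ maxPeriodicPrefix v q) :
    maxPeriodicPrefix u q ≤ lcp u v := by
  obtain ⟨hqu, -, htake⟩ := le_lcp_iff.mp h
  obtain ⟨hdu, hu⟩ := le_maxPeriodicPrefix_iff.mp le_rfl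
  obtain ⟨hdv, hv⟩ := le_maxPeriodicPrefix_iff.mp hle
  have hqd : q ≤ maxPeriodicPrefix u q :=
    le_maxPeriodicPrefix_iff.mpr ⟨hqu, hasPeriod_of_length_le (by simp)⟩
  refine le_lcp_iff.mpr ⟨hdu, hdv, hu.eq_of_take_eq hq ?_ hv ?_⟩
  · simp [hdu, hdv]
  · simpa [List.take_take, min_eq_left hqd] using htake

theorem lcp_eq_maxPeriodicPrefix_of_lt {u v : List α} {q : ℕ} (hq : 0 < q) (h : q ≤ lcp u v)
    (hlt : maxPeriodicPrefix u q < maxPeriodicPrefix v q) :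
    lcp u v = maxPeriodicPrefix u q := by
  refine le_antisymm ?_ (maxPeriodicPrefix_le_lcp hq h hlt.le)
  exact (min_le_iff.mp (min_lcp_maxPeriodicPrefix_le u v q)).resolve_right hlt.not_ge

theorem lcp_comm (u v : List α) : lcp u v = lcp v u := by
  simp only [lcp, and_left_comm, eq_comm]

end

/-- if `lcp(u, u') ≥ q` and `d`, `d'` are the lengths of the longest
prefixes of `u`, `u'` with period `q`, then `d ≠ d'` implies `lcp(u,u') = min(d,d')`,
and `d = d'` implies `lcp(u,u') ≥ d`. -/
theorem lcp_via_periodic_prefixes {α : Type*} (u u' : List α) (q : ℕ)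
    (hq : 0 < q) (h : q ≤ lcp u u') :
    (maxPeriodicPrefix u q ≠ maxPeriodicPrefix u' q →
      lcp u u' = min (maxPeriodicPrefix u q) (maxPeriodicPrefix u' q)) ∧
    (maxPeriodicPrefix u q = maxPeriodicPrefix u' q →
      maxPeriodicPrefix u q ≤ lcp u u') := by
  refine ⟨fun hne => ?_, fun heq => maxPeriodicPrefix_le_lcp hq h heq.le⟩
  rcases hne.lt_or_gt with hlt | hlt
  · rw [min_eq_left hlt.le, lcp_eq_maxPeriodicPrefix_of_lt hq h hlt]
  · rw [min_eq_right hlt.le, lcp_comm, lcp_eq_maxPeriodicPrefix_of_lt hq (lcp_comm u u' ▸ h) hlt]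
end

section
/- Let x and y be words of the same length n ≥ 1. Then the set R(x, y) = {r : 0 ≤ r ≤ n−1 and y = Rot(x, r)} of cyclic shift values forms an arithmetic progression. -/
/-- `Rot(u) = u[n]u[1]…u[n−1]`: rotation by one position to the right. -/
def rotOne {α : Type*} (u : List α) : List α :=
  u.drop (u.length - 1) ++ u.take (u.length - 1)

/-!
For any map `f`, the exponents `r` with `f^[r] x = y`, if there
are any, are `a + t p` for `t ∈ ℕ`, where `a` is the least of them and `p` is the minimal period
of `y` (with `p = 0` when `y` is not periodic). Indeed, for `r ≥ a`,
`f^[r] x = f^[r - a] y`, which equals `y` exactly when `p ∣ r - a`. Cutting such a progression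
off at `n - 1` leaves a finite arithmetic progression.
-/

open Function Set

namespace Function

variable {β : Type*} {f : β → β} {x y : β} {a : ℕ}

theorem iterate_eq_iff_of_isLeast (ha : IsLeast {r | f^[r] x = y} a) (r : ℕ) :
    f^[r] x = y ↔ ∃ t, a + t * minimalPeriod f y = r := by
  constructor
  · intro hr
    have har : a ≤ r := ha.2 hr
    have hperiodic : IsPeriodicPt f (r - a) y := by
      rw [IsPeriodicPt, IsFixedPt, ← ha.1, ← iterate_add_apply, Nat.sub_add_cancel har, hr, ha.1]
    obtain ⟨t, ht⟩ := hperiodic.minimalPeriod_dvd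
    exact ⟨t, by rw [mul_comm, ← ht, Nat.add_sub_cancel' har]⟩
  · rintro ⟨t, rfl⟩
    rw [add_comm, iterate_add_apply, ha.1]
    exact (isPeriodicPt_minimalPeriod f y).const_mul t

theorem setOf_iterate_eq_eq_range (ha : IsLeast {r | f^[r] x = y} a) :
    {r | f^[r] x = y} = range (fun t => a + t * minimalPeriod f y) := by
  ext r
  exact iterate_eq_iff_of_isLeast ha r

end Function

theorem Nat.exists_image_Iio_eq_range_inter_Iic (a d N : ℕ) :
    ∃ m, (fun t => a + t * d) '' Iio m = range (fun t => a + t * d) ∩ Iic N := by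
  by_cases haN : a ≤ N
  swap
  · refine ⟨0, ?_⟩
    ext r
    simp only [Iio_zero_eq_empty, image_empty, mem_empty_iff_false, false_iff]
    rintro ⟨⟨t, rfl⟩, hr⟩
    exact haN (le_of_add_le_left hr)
  -- for `d = 0` the division is `0`, so `m = 1` and both sides are `{a}`
  refine ⟨(N - a) / d + 1, ?_⟩
  ext r
  simp only [mem_image, mem_Iio, mem_inter_iff, mem_range, mem_Iic]
  constructor
  · rintro ⟨t, ht, rfl⟩
    have : t * d ≤ N - a :=
      (Nat.mul_le_mul_right d (Nat.le_of_lt_succ ht)).trans (Nat.div_mul_le_self _ _)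
    exact ⟨⟨t, rfl⟩, by omega⟩
  · rintro ⟨⟨t, rfl⟩, hr⟩
    rcases Nat.eq_zero_or_pos d with rfl | hd
    · exact ⟨0, Nat.succ_pos _, by simp⟩
    · exact ⟨t, Nat.lt_succ_of_le ((Nat.le_div_iff_mul_le hd).2 (by omega)), rfl⟩

theorem Function.exists_setOf_iterate_eq_inter_Iic_eq_image_Iio {β : Type*} (f : β → β)
    (x y : β) (N : ℕ) :
    ∃ a d m : ℕ, {r | r ≤ N ∧ f^[r] x = y} = (fun t => a + t * d) '' Iio m := by
  by_cases hreach : ∃ r, f^[r] x = y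
  · classical
    have ha : IsLeast {r | f^[r] x = y} (Nat.find hreach) :=
      ⟨Nat.find_spec hreach, fun r hr => Nat.find_min' hreach hr⟩
    obtain ⟨m, hm⟩ :=
      Nat.exists_image_Iio_eq_range_inter_Iic (Nat.find hreach) (minimalPeriod f y) N
    refine ⟨Nat.find hreach, minimalPeriod f y, m, ?_⟩
    rw [hm, ← setOf_iterate_eq_eq_range ha, inter_comm]
    rfl
  · refine ⟨0, 0, 0, ?_⟩
    push Not at hreach
    simp [hreach]

theorem cyclic_shifts_form_arith_progression_general {α : Type*} (x y : List α) (n : ℕ) :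
    ∃ a d m : ℕ,
      {r | r ≤ n - 1 ∧ y = rotOne^[r] x} = (fun t => a + t * d) '' Set.Iio m := by
  simpa only [eq_comm] using exists_setOf_iterate_eq_inter_Iic_eq_image_Iio rotOne x y (n - 1)

/-- for words `x`, `y` of common length `n ≥ 1`, the set
`R(x,y) = {r : 0 ≤ r ≤ n−1, y = Rot(x,r)}` of cyclic shift values is an
arithmetic progression. -/
theorem cyclic_shifts_form_arith_progression {α : Type*} (x y : List α) (n : ℕ)
    (hn : 1 ≤ n) (hx : x.length = n) (hy : y.length = n) :
    ∃ a d m : ℕ,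
      {r | r ≤ n - 1 ∧ y = rotOne^[r] x} = (fun t => a + t * d) '' Set.Iio m :=
  cyclic_shifts_form_arith_progression_general x y n
end

section
/- Let a = (a₁, …, a_n) be a sequence over [1, m], let π be a permutation of [1, m], let Δ ≥ 1 and ℓ be integers, let A = {i ∈ [1, n] : π(a_i) ≤ ℓ}, and let C = FillGaps(A, Δ, [1, n]). Then C contains all local π-minima, i.e., for every i ∈ [1, n−Δ] it holds that f_π(i) ∈ C. -/
/-! If the window `[i, i+Δ]` contains a position of value at most `ℓ`, so does its minimum
position, which then lies in `A`; otherwise the whole window avoids `A` and is one of the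
gaps that `FillGaps` fills. -/

/-- `FillGaps(A, Δ, I)`: `A` together with all maximal subintervals
`[i, i+Δ] ⊆ I ∖ A` of `Δ+1` consecutive integers disjoint from `A`. -/
def FillGaps (A : Set ℕ) (Δ : ℕ) (I : Set ℕ) : Set ℕ :=
  A ∪ {x | ∃ i, x ∈ Set.Icc i (i + Δ) ∧ Set.Icc i (i + Δ) ⊆ I \ A}

/-- The local minimum function: `localMin b Δ i` is the smallest index
`j ∈ [i, i+Δ]` at which `b` attains its minimum on `[i, i+Δ]`. -/
noncomputable def localMin {β : Type*} [LinearOrder β] (b : ℕ → β) (Δ i : ℕ) : ℕ :=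
  sInf {j | j ∈ Set.Icc i (i + Δ) ∧ ∀ t ∈ Set.Icc i (i + Δ), b j ≤ b t}

open Set

section LocalMin

variable {β : Type*} [LinearOrder β] (b : ℕ → β) {Δ i : ℕ}

theorem localMin_spec :
    localMin b Δ i ∈ Icc i (i + Δ) ∧ ∀ t ∈ Icc i (i + Δ), b (localMin b Δ i) ≤ b t := by
  obtain ⟨j, hj, hmin⟩ := Finset.exists_min_image (Finset.Icc i (i + Δ)) b ⟨i, by simp⟩
  exact csInf_mem (s := {j | j ∈ Icc i (i + Δ) ∧ ∀ t ∈ Icc i (i + Δ), b j ≤ b t})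
    ⟨j, by simpa using hj, fun t ht => hmin t (by simpa using ht)⟩

theorem localMin_mem_Icc : localMin b Δ i ∈ Icc i (i + Δ) :=
  (localMin_spec b).1

theorem localMin_le {t : ℕ} (ht : t ∈ Icc i (i + Δ)) : b (localMin b Δ i) ≤ b t :=
  (localMin_spec b).2 t ht

theorem localMin_mem_fillGaps (ℓ : β) {I : Set ℕ} (hI : Icc i (i + Δ) ⊆ I) :
    localMin b Δ i ∈ FillGaps {t | t ∈ I ∧ b t ≤ ℓ} Δ I := by
  by_cases h : ∃ t ∈ Icc i (i + Δ), b t ≤ ℓ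
  · obtain ⟨t, ht, htℓ⟩ := h
    exact Or.inl ⟨hI (localMin_mem_Icc b), (localMin_le b ht).trans htℓ⟩
  · push Not at h
    exact Or.inr ⟨i, localMin_mem_Icc b, fun t ht => ⟨hI ht, fun hA => (h t ht).not_ge hA.2⟩⟩

end LocalMin

theorem fillGaps_contains_local_minima_general (n Δ ℓ : ℕ)
    (a : ℕ → ℕ)
    (π : ℕ → ℕ) :
    ∀ i ∈ Set.Icc 1 (n - Δ),
      localMin (fun t => π (a t)) Δ i ∈
        FillGaps {i | i ∈ Set.Icc 1 n ∧ π (a i) ≤ ℓ} Δ (Set.Icc 1 n) := by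
  rintro i ⟨hi1, hin⟩
  exact localMin_mem_fillGaps _ ℓ fun t ⟨hit, hti⟩ => ⟨by omega, by omega⟩

/-- for a sequence `a` over `[1,m]` (1-indexed, positions `1..n`),
a permutation `π` of `[1,m]`, `Δ ≥ 1`, `A = {i ∈ [1,n] : π(aᵢ) ≤ ℓ}` and
`C = FillGaps(A, Δ, [1,n])`, the set `C` contains all local `π`-minima:
`f_π(i) ∈ C` for every `i ∈ [1, n−Δ]`. -/
theorem fillGaps_contains_local_minima (n m Δ ℓ : ℕ) (hΔ : 1 ≤ Δ)
    (a : ℕ → ℕ) (ha : ∀ i ∈ Set.Icc 1 n, a i ∈ Set.Icc 1 m)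
    (π : ℕ → ℕ) (hπ : Set.BijOn π (Set.Icc 1 m) (Set.Icc 1 m)) :
    ∀ i ∈ Set.Icc 1 (n - Δ),
      localMin (fun t => π (a t)) Δ i ∈
        FillGaps {i | i ∈ Set.Icc 1 n ∧ π (a i) ≤ ℓ} Δ (Set.Icc 1 n) :=
  fillGaps_contains_local_minima_general n Δ ℓ a π
end

section
/- Let Δ ≥ 2 and n, m be positive integers, and let a = (a₁, …, a_n) be a (Δ/2)-diverse sequence over [1, m]. Let π be a permutation of [1, m] drawn uniformly at random, let ℓ = ⌊2m·ln(Δ)/Δ⌋, let A = {i ∈ [1, n] : π(a_i) ≤ ℓ}, and let C = FillGaps(A, Δ, [1, n]). Then the expected size of C satisfies E[|C|] ≤ 2n·ln(Δ)/Δ + 6n/Δ. -/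
/-- A sequence `a` with positions `1..n` and values in `Fin m` (representing the
alphabet `[1,m]` via `σ ↦ σ + 1`) is `(Δ/2)`-diverse: positions carrying equal
values are at distance greater than `Δ/2`. -/
def HalfDiverse (n Δ : ℕ) {m : ℕ} (a : ℕ → Fin m) : Prop :=
  ∀ i ∈ Set.Icc 1 n, ∀ j ∈ Set.Icc 1 n, a i = a j → i < j → Δ < 2 * (j - i)

open Finset

section PermsMapping

variable {α : Type*} [Fintype α] [DecidableEq α]

def permsMapping (T S : Finset α) : Finset (Equiv.Perm α) := {π | ∀ v ∈ T, π v ∈ S}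

/-- The swap `(u u')` carries the fibre over `u` injectively into the fibre over `u'`: it only
moves the images of `T` that equal `u'`, and sends them to `u ∈ S`. -/
lemma card_filter_permsMapping_apply_eq_le {T S : Finset α} {w u : α} (hw : w ∉ T) (hu : u ∈ S)
    (u' : α) :
    #{π ∈ permsMapping T S | π w = u} ≤ #{π ∈ permsMapping T S | π w = u'} := by
  refine card_le_card_of_injOn (Equiv.swap u u' * ·) ?_ fun π _ π' _ h => mul_left_cancel h
  intro π hπ
  simp only [permsMapping, coe_filter, mem_filter, mem_univ, true_and, Set.mem_ofPred_eq] at hπ ⊢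
  obtain ⟨hT, rfl⟩ := hπ
  refine ⟨fun v hv => ?_, by simp⟩
  have hvw : π v ≠ π w := π.injective.ne (ne_of_mem_of_not_mem hv hw)
  by_cases hvu' : π v = u'
  · simpa [hvu'] using hu
  · simpa [Equiv.swap_apply_of_ne_of_ne hvw hvu'] using hT v hv

lemma card_permsMapping_insert_mul_le {T : Finset α} (S : Finset α) {w : α} (hw : w ∉ T) :
    #(permsMapping (insert w T) S) * Fintype.card α ≤ #S * #(permsMapping T S) := by
  set P := permsMapping T S
  have hinsert : permsMapping (insert w T) S = {π ∈ P | π w ∈ S} := by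
    ext π
    simp [P, permsMapping, and_comm]
  have hfibre : ∀ u ∈ S, {π ∈ {π ∈ P | π w ∈ S} | π w = u} = {π ∈ P | π w = u} := by
    intro u hu
    rw [filter_filter]
    exact filter_congr fun π _ => ⟨And.right, fun h => ⟨h ▸ hu, h⟩⟩
  calc #(permsMapping (insert w T) S) * Fintype.card α
      = ∑ u ∈ S, ∑ _u' : α, #{π ∈ P | π w = u} := by
        rw [hinsert, card_eq_sum_card_fiberwise (f := (· w)) (s := {π ∈ P | π w ∈ S}) (t := S)
          fun π hπ => (mem_filter.1 hπ).2, sum_mul]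
        refine sum_congr rfl fun u hu => ?_
        rw [hfibre u hu, sum_const, card_univ, smul_eq_mul, mul_comm]
    _ ≤ ∑ u ∈ S, ∑ u' : α, #{π ∈ P | π w = u'} :=
        sum_le_sum fun u hu => sum_le_sum fun u' _ => card_filter_permsMapping_apply_eq_le hw hu u'
    _ = #S * #P := by
        rw [sum_const, ← card_eq_sum_card_fiberwise fun _ _ => mem_univ _, smul_eq_mul]

lemma card_permsMapping_mul_le (T S : Finset α) :
    #(permsMapping T S) * Fintype.card α ^ #T ≤ #S ^ #T * Fintype.card (Equiv.Perm α) := by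
  induction T using Finset.induction_on with
  | empty => simp [permsMapping]
  | insert w T hw ih =>
    rw [card_insert_of_notMem hw, pow_succ, pow_succ]
    calc #(permsMapping (insert w T) S) * (Fintype.card α ^ #T * Fintype.card α)
        = #(permsMapping (insert w T) S) * Fintype.card α * Fintype.card α ^ #T := by ring
      _ ≤ #S * #(permsMapping T S) * Fintype.card α ^ #T :=
        Nat.mul_le_mul_right _ (card_permsMapping_insert_mul_le S hw)
      _ ≤ #S * (#S ^ #T * Fintype.card (Equiv.Perm α)) := by
        rw [mul_assoc]
        gcongr
      _ = #S ^ #T * #S * Fintype.card (Equiv.Perm α) := by ring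

lemma card_permsMapping_le [Nonempty α] (T S : Finset α) :
    (#(permsMapping T S) : ℝ) ≤ (#S / Fintype.card α : ℝ) ^ #T * Fintype.card (Equiv.Perm α) := by
  rw [div_pow, div_mul_eq_mul_div, le_div_iff₀ (by positivity)]
  exact_mod_cast card_permsMapping_mul_le T S

lemma card_filter_forall_apply_notMem_le [Nonempty α] {β : Type*} {a : β → α} {W : Finset β}
    (ha : Set.InjOn a W) (L : Finset α) :
    (#{π : Equiv.Perm α | ∀ j ∈ W, π (a j) ∉ L} : ℝ)
      ≤ (1 - #L / Fintype.card α : ℝ) ^ #W * Fintype.card (Equiv.Perm α) := by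
  have hcompl : (#Lᶜ / Fintype.card α : ℝ) = 1 - #L / Fintype.card α := by
    rw [card_compl, Nat.cast_sub (card_le_univ L), sub_div, div_self (by positivity)]
  calc (#{π : Equiv.Perm α | ∀ j ∈ W, π (a j) ∉ L} : ℝ) = #(permsMapping (W.image a) Lᶜ) := by
        simp [permsMapping]
    _ ≤ _ := card_permsMapping_le _ _
    _ = _ := by rw [hcompl, card_image_of_injOn ha]

end PermsMapping

lemma fillGaps_subset {A I : Set ℕ} (hA : A ⊆ I) (Δ : ℕ) : FillGaps A Δ I ⊆ I :=
  Set.union_subset hA fun _ ⟨_, hx, hsub⟩ => (hsub hx).1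

/-- A point of a gap `[i, i + Δ]` lies at distance at least `⌊Δ/2⌋` from one of its ends. -/
lemma mem_or_halfGap_subset_of_mem_fillGaps {A I : Set ℕ} {Δ x : ℕ}
    (hx : x ∈ FillGaps A Δ I) :
    x ∈ A ∨ (Δ / 2 ≤ x ∧ Set.Icc (x - Δ / 2) x ⊆ I \ A) ∨ Set.Icc x (x + Δ / 2) ⊆ I \ A := by
  rcases hx with hxA | ⟨i, ⟨hix, hxi⟩, hgap⟩
  · exact Or.inl hxA
  · right
    rcases le_or_gt (i + Δ / 2) x with h | h
    · exact Or.inl ⟨by omega, (Set.Icc_subset_Icc (by omega) hxi).trans hgap⟩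
    · exact Or.inr <| (Set.Icc_subset_Icc hix (by omega)).trans hgap

open Classical in
lemma sum_ncard_eq_sum_card_filter_mem {ι β : Type*} [Fintype ι] {f : ι → Set β} {s : Finset β}
    (hf : ∀ i, f i ⊆ s) :
    ∑ i, (f i).ncard = ∑ x ∈ s, #{i | x ∈ f i} := by
  have hf' : ∀ i, f i = ↑{x ∈ s | x ∈ f i} := fun i => by
    ext x
    simpa using fun hx => hf i hx
  simp_rw [fun i => congrArg Set.ncard (hf' i), Set.ncard_coe_finset]
  exact sum_card_bipartiteAbove_eq_sum_card_bipartiteBelow (fun i x => x ∈ f i)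

lemma HalfDiverse.injOn_Icc {n Δ m : ℕ} {a : ℕ → Fin m} (hdiv : HalfDiverse n Δ a) {u : ℕ}
    (hu : Set.Icc u (u + Δ / 2) ⊆ Set.Icc 1 n) : Set.InjOn a (Set.Icc u (u + Δ / 2)) := by
  intro i hi j hj hij
  by_contra hne
  rcases lt_or_gt_of_ne hne with h | h
  · have := hdiv i (hu hi) j (hu hj) hij h
    simp only [Set.mem_Icc] at hi hj
    omega
  · have := hdiv j (hu hj) i (hu hi) hij.symm h
    simp only [Set.mem_Icc] at hi hj
    omega

open Real in
lemma two_mul_log_le_self {x : ℝ} (hx : 0 ≤ x) : 2 * log x ≤ x := by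
  rcases hx.eq_or_lt with rfl | hx
  · simp
  have h := exp_one_mul_le_exp (x := log x)
  rw [exp_log hx] at h
  rcases le_total 0 (log x) with hlog | hlog
  · nlinarith [exp_one_gt_d9]
  · linarith

open Real in
lemma one_sub_div_pow_le_three_div {Δ m ℓ : ℝ} {k : ℕ} (hΔ : 1 ≤ Δ) (hℓm : ℓ ≤ m)
    (hℓ : 2 * m * log Δ / Δ < ℓ + 1) (hk : Δ + 1 ≤ 2 * k) (hkm : k ≤ m) :
    (1 - ℓ / m) ^ k ≤ 3 / Δ := by
  have hΔ0 : 0 < Δ := by linarith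
  have hm : 0 < m := by linarith
  have hlog : 0 ≤ log Δ / Δ := div_nonneg (log_nonneg hΔ) hΔ0.le
  have hℓ' : 2 * (log Δ / Δ) - 1 / m < ℓ / m := by
    rw [sub_lt_iff_lt_add, ← add_div, lt_div_iff₀ hm]
    calc 2 * (log Δ / Δ) * m = 2 * m * log Δ / Δ := by ring
      _ < ℓ + 1 := hℓ
  have hkℓ : log Δ - 1 ≤ k * (ℓ / m) := by
    have h1 : (Δ + 1) * (log Δ / Δ) ≤ 2 * k * (log Δ / Δ) := mul_le_mul_of_nonneg_right hk hlog
    have h2 : (Δ + 1) * (log Δ / Δ) = log Δ + log Δ / Δ := by field_simp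
    have h3 : k * (1 / m) ≤ 1 := by rwa [mul_one_div, div_le_one hm]
    have h4 : k * (2 * (log Δ / Δ) - 1 / m) ≤ k * (ℓ / m) :=
      mul_le_mul_of_nonneg_left hℓ'.le k.cast_nonneg
    linarith
  calc (1 - ℓ / m) ^ k ≤ exp (-(ℓ / m)) ^ k :=
        pow_le_pow_left₀ (by rw [sub_nonneg, div_le_one hm]; exact hℓm)
          (by linarith [add_one_le_exp (-(ℓ / m))]) k
    _ = exp (-(k * (ℓ / m))) := by rw [← exp_nat_mul, mul_neg]
    _ ≤ exp (1 - log Δ) := exp_le_exp.2 (by linarith)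
    _ = exp 1 / Δ := by rw [exp_sub, exp_log hΔ0]
    _ ≤ 3 / Δ := by
        gcongr
        linarith [exp_one_lt_d9]

noncomputable def threshold (m Δ : ℕ) : ℕ := ⌊2 * (m : ℝ) * Real.log Δ / Δ⌋₊

lemma threshold_le (m Δ : ℕ) : threshold m Δ ≤ m :=
  Nat.floor_le_of_le <| div_le_of_le_mul₀ Δ.cast_nonneg m.cast_nonneg <| by
    nlinarith [two_mul_log_le_self Δ.cast_nonneg, m.cast_nonneg (α := ℝ)]

lemma threshold_div_le (m Δ : ℕ) : (threshold m Δ : ℝ) / m ≤ 2 * Real.log Δ / Δ := by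
  refine div_le_of_le_mul₀ m.cast_nonneg (by positivity) ?_
  calc (threshold m Δ : ℝ) ≤ 2 * m * Real.log Δ / Δ := Nat.floor_le (by positivity)
    _ = 2 * Real.log Δ / Δ * m := by ring

lemma card_filter_val_lt_threshold (m Δ : ℕ) :
    #{w : Fin m | w < threshold m Δ} = threshold m Δ := by
  rw [Fin.card_filter_val_lt, min_eq_right (threshold_le m Δ)]

lemma card_filter_apply_lt_le {m : ℕ} (v : Fin m) (ℓ : ℕ) :
    (#{π : Equiv.Perm (Fin m) | (π v : ℕ) < ℓ} : ℝ)
      ≤ ℓ / m * Fintype.card (Equiv.Perm (Fin m)) := by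
  have : Nonempty (Fin m) := ⟨v⟩
  calc (#{π : Equiv.Perm (Fin m) | (π v : ℕ) < ℓ} : ℝ)
      = #(permsMapping {v} {w : Fin m | w < ℓ}) := by simp [permsMapping]
    _ ≤ _ := card_permsMapping_le _ _
    _ ≤ ℓ / m * Fintype.card (Equiv.Perm (Fin m)) := by
        rw [card_singleton, pow_one, Fin.card_filter_val_lt, Fintype.card_fin]
        gcongr
        exact_mod_cast min_le_right m ℓ

section FillGapsCount

variable {n m Δ : ℕ} {a : ℕ → Fin m}

open Classical in
lemma card_filter_halfGap_subset_le (hΔ : 2 ≤ Δ) (hdiv : HalfDiverse n Δ a) (u : ℕ) :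
    (#{π : Equiv.Perm (Fin m) | Set.Icc u (u + Δ / 2) ⊆
        Set.Icc 1 n \ {i | i ∈ Set.Icc 1 n ∧ (π (a i) : ℕ) + 1 ≤ threshold m Δ}} : ℝ)
      ≤ 3 / Δ * Fintype.card (Equiv.Perm (Fin m)) := by
  by_cases hW : Set.Icc u (u + Δ / 2) ⊆ Set.Icc 1 n
  swap
  · rw [filter_false_of_mem fun π _ h => hW fun j hj => (h hj).1]
    simp only [card_empty, CharP.cast_eq_zero]
    positivity
  have : Nonempty (Fin m) := ⟨a u⟩
  have hinj : Set.InjOn a ↑(Finset.Icc u (u + Δ / 2)) := by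
    simpa using hdiv.injOn_Icc hW
  have hk : #(Finset.Icc u (u + Δ / 2)) = Δ / 2 + 1 := by rw [Nat.card_Icc]; omega
  have hkm : Δ / 2 + 1 ≤ m := by
    simpa [hk] using card_le_card_of_injOn a (fun _ _ => mem_univ _) hinj
  calc _ ≤ (#{π : Equiv.Perm (Fin m) | ∀ j ∈ Finset.Icc u (u + Δ / 2),
          π (a j) ∉ ({w | w < threshold m Δ} : Finset (Fin m))} : ℝ) := by
        gcongr with π
        intro hπ j hj hjL
        have hjA := (hπ (Finset.mem_Icc.1 hj)).2
        simp only [Set.mem_ofPred_eq, not_and] at hjA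
        simp only [mem_filter, mem_univ, true_and] at hjL
        exact hjA (hW (Finset.mem_Icc.1 hj)) hjL
    _ ≤ _ := card_filter_forall_apply_notMem_le hinj _
    _ ≤ 3 / Δ * Fintype.card (Equiv.Perm (Fin m)) := by
        gcongr
        rw [hk, card_filter_val_lt_threshold, Fintype.card_fin]
        exact one_sub_div_pow_le_three_div (by norm_cast; omega)
          (by exact_mod_cast threshold_le m Δ) (Nat.lt_floor_add_one _) (by norm_cast; omega)
          (by exact_mod_cast hkm)

open Classical in
lemma card_filter_mem_fillGaps_le (hΔ : 2 ≤ Δ) (hdiv : HalfDiverse n Δ a) (x : ℕ) :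
    (#{π : Equiv.Perm (Fin m) | x ∈ FillGaps
        {i | i ∈ Set.Icc 1 n ∧ (π (a i) : ℕ) + 1 ≤ threshold m Δ} Δ (Set.Icc 1 n)} : ℝ)
      ≤ (2 * Real.log Δ / Δ + 6 / Δ) * Fintype.card (Equiv.Perm (Fin m)) := by
  set A : Equiv.Perm (Fin m) → Set ℕ :=
    fun π => {i | i ∈ Set.Icc 1 n ∧ (π (a i) : ℕ) + 1 ≤ threshold m Δ}
  set P := Fintype.card (Equiv.Perm (Fin m))
  set low : Finset (Equiv.Perm (Fin m)) := {π | (π (a x) : ℕ) < threshold m Δ}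
  set gap : ℕ → Finset (Equiv.Perm (Fin m)) :=
    fun u => {π | Set.Icc u (u + Δ / 2) ⊆ Set.Icc 1 n \ A π}
  set event : Finset (Equiv.Perm (Fin m)) := {π | x ∈ FillGaps (A π) Δ (Set.Icc 1 n)}
  have hcover : event ⊆ low ∪ (gap (x - Δ / 2) ∪ gap x) := by
    intro π
    simp only [event, low, gap, mem_filter, mem_univ, true_and, mem_union]
    intro hx
    rcases mem_or_halfGap_subset_of_mem_fillGaps hx with hxA | hleft | hright
    · exact Or.inl hxA.2
    · exact Or.inr (Or.inl (by rw [Nat.sub_add_cancel hleft.1]; exact hleft.2))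
    · exact Or.inr (Or.inr hright)
  have hcount : #event ≤ #low + (#(gap (x - Δ / 2)) + #(gap x)) :=
    (card_le_card hcover).trans <|
      (card_union_le _ _).trans (Nat.add_le_add_left (card_union_le _ _) _)
  calc _ ≤ (#low + (#(gap (x - Δ / 2)) + #(gap x)) : ℝ) := by exact_mod_cast hcount
    _ ≤ threshold m Δ / m * P + (3 / Δ * P + 3 / Δ * P) := by
        gcongr
        · exact card_filter_apply_lt_le _ _
        · exact card_filter_halfGap_subset_le hΔ hdiv _
        · exact card_filter_halfGap_subset_le hΔ hdiv _
    _ = (threshold m Δ / m + 6 / Δ) * P := by ring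
    _ ≤ (2 * Real.log Δ / Δ + 6 / Δ) * P := by
        gcongr ?_ * _
        exact add_le_add_left (threshold_div_le m Δ) _

end FillGapsCount

theorem expected_fillGaps_size_general (n m Δ : ℕ) (hΔ : 2 ≤ Δ)
    (a : ℕ → Fin m) (hdiv : HalfDiverse n Δ a) :
    (∑ π : Equiv.Perm (Fin m),
        ((FillGaps
            {i | i ∈ Set.Icc 1 n ∧
              (π (a i) : ℕ) + 1 ≤ ⌊2 * (m : ℝ) * Real.log Δ / Δ⌋₊}
            Δ (Set.Icc 1 n)).ncard : ℝ))
      / (Fintype.card (Equiv.Perm (Fin m)) : ℝ)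
    ≤ 2 * n * Real.log Δ / Δ + 6 * n / Δ := by
  classical
  set C : Equiv.Perm (Fin m) → Set ℕ := fun π => FillGaps
    {i | i ∈ Set.Icc 1 n ∧ (π (a i) : ℕ) + 1 ≤ threshold m Δ} Δ (Set.Icc 1 n)
  have hC : ∀ π, C π ⊆ ↑(Finset.Icc 1 n) := fun π => by
    simpa using fillGaps_subset (fun _ hi => hi.1) Δ
  rw [div_le_iff₀ (by positivity)]
  calc ∑ π, ((C π).ncard : ℝ) = ∑ x ∈ Finset.Icc 1 n, (#{π | x ∈ C π} : ℝ) := by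
        exact_mod_cast sum_ncard_eq_sum_card_filter_mem hC
    _ ≤ ∑ x ∈ Finset.Icc 1 n,
          (2 * Real.log Δ / Δ + 6 / Δ) * Fintype.card (Equiv.Perm (Fin m)) :=
        sum_le_sum fun x _ => card_filter_mem_fillGaps_le hΔ hdiv x
    _ = _ := by
        rw [sum_const, Nat.card_Icc, Nat.add_sub_cancel, nsmul_eq_mul]
        ring

/-- for a `(Δ/2)`-diverse sequence `a` over `[1,m]` (values in
`Fin m`, identified with `[1,m]` via `σ ↦ σ+1`), a uniformly random permutation
`π` of `[1,m]`, `ℓ = ⌊2m·ln(Δ)/Δ⌋`, `A = {i ∈ [1,n] : π(aᵢ) ≤ ℓ}` and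
`C = FillGaps(A, Δ, [1,n])`, the expected size of `C` is at most
`2n·ln(Δ)/Δ + 6n/Δ`. -/
theorem expected_fillGaps_size (n m Δ : ℕ) (hn : 0 < n) (hm : 0 < m) (hΔ : 2 ≤ Δ)
    (a : ℕ → Fin m) (hdiv : HalfDiverse n Δ a) :
    (∑ π : Equiv.Perm (Fin m),
        ((FillGaps
            {i | i ∈ Set.Icc 1 n ∧
              (π (a i) : ℕ) + 1 ≤ ⌊2 * (m : ℝ) * Real.log Δ / Δ⌋₊}
            Δ (Set.Icc 1 n)).ncard : ℝ))
      / (Fintype.card (Equiv.Perm (Fin m)) : ℝ)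
    ≤ 2 * n * Real.log Δ / Δ + 6 * n / Δ :=
  expected_fillGaps_size_general n m Δ hΔ a hdiv
end

section
/- Let a = (a₁, …, a_n) be a sequence over [1, m] and Δ ≥ 1 an integer such that any Δ+1 consecutive entries of a are pairwise distinct. Let π be a permutation of [1, m] drawn uniformly at random. Then for every i ∈ [1, n−Δ−1], the probability that f_π(i) ≠ f_π(i+1) is at most 2/(Δ+1). -/
/-- If `j` is a strict minimizer of `b` on the window, then `localMin` equals `j`. -/
lemma localMin_eq_of_strict {β : Type*} [LinearOrder β] (b : ℕ → β) (Δ i j : ℕ)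
    (hj : j ∈ Set.Icc i (i + Δ))
    (hmin : ∀ t ∈ Set.Icc i (i + Δ), t ≠ j → b j < b t) :
    localMin b Δ i = j := by
  have hjmem : j ∈ {j' | j' ∈ Set.Icc i (i + Δ) ∧ ∀ t ∈ Set.Icc i (i + Δ), b j' ≤ b t} := by
    refine ⟨hj, fun t ht => ?_⟩
    rcases eq_or_ne t j with rfl | h
    · exact le_rfl
    · exact (hmin t ht h).le
  have hset : {j' | j' ∈ Set.Icc i (i + Δ) ∧ ∀ t ∈ Set.Icc i (i + Δ), b j' ≤ b t} = {j} := by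
    refine Set.eq_singleton_iff_unique_mem.mpr ⟨hjmem, ?_⟩
    rintro k ⟨hk, hk2⟩
    by_contra hne
    exact absurd (hk2 j hj) (not_le.2 (hmin k hk hne))
  rw [localMin, hset, csInf_singleton]

/-- Counting lemma: the number of permutations making `v d` the strict minimum
among `v 0, …, v Δ` is at most `m! / (Δ+1)`. -/
lemma count_min_le (m Δ : ℕ) (v : ℕ → Fin m) (d : ℕ) (hd : d ≤ Δ)
    (hv : ∀ k l, k ≤ Δ → l ≤ Δ → k ≠ l → v k ≠ v l) :
    {π : Equiv.Perm (Fin m) | ∀ l ≤ Δ, l ≠ d → π (v d) < π (v l)}.ncard * (Δ + 1)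
      ≤ Fintype.card (Equiv.Perm (Fin m)) := by
  set S := {π : Equiv.Perm (Fin m) | ∀ l ≤ Δ, l ≠ d → π (v d) < π (v l)} with hS
  have key : ∀ σ : Equiv.Perm (Fin m), σ ∈ S → ∀ c : Fin (Δ + 1), ∀ l ≤ Δ, l ≠ (c : ℕ) →
      (σ * Equiv.swap (v d) (v (c : ℕ))) (v (c : ℕ)) < (σ * Equiv.swap (v d) (v (c : ℕ))) (v l) := by
    intro σ hσ c l hl hlc
    have hc : (c : ℕ) ≤ Δ := Nat.lt_succ_iff.mp c.2
    have h1 : (σ * Equiv.swap (v d) (v (c : ℕ))) (v (c : ℕ)) = σ (v d) := by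
      simp [Equiv.Perm.mul_apply, Equiv.swap_apply_right]
    rw [h1]
    rcases eq_or_ne l d with rfl | hld
    · -- l = d, so c ≠ d
      have hcd : (c : ℕ) ≠ l := fun h => hlc h.symm
      have h2 : (σ * Equiv.swap (v l) (v (c : ℕ))) (v l) = σ (v (c : ℕ)) := by
        simp [Equiv.Perm.mul_apply, Equiv.swap_apply_left]
      rw [h2]
      exact hσ (c : ℕ) hc hcd
    · have hvl1 : v l ≠ v d := hv l d hl hd hld
      have hvl2 : v l ≠ v (c : ℕ) := hv l (c : ℕ) hl hc hlc
      have h2 : (σ * Equiv.swap (v d) (v (c : ℕ))) (v l) = σ (v l) := by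
        simp [Equiv.Perm.mul_apply, Equiv.swap_apply_of_ne_of_ne hvl1 hvl2]
      rw [h2]
      exact hσ l hl hld
  have hG : Function.Injective
      (fun p : S × Fin (Δ + 1) =>
        (p.1 : Equiv.Perm (Fin m)) * Equiv.swap (v d) (v ((p.2 : ℕ)))) := by
    rintro ⟨⟨π, hπ⟩, k⟩ ⟨⟨π', hπ'⟩, k'⟩ h
    simp only at h
    have hk : (k : ℕ) = (k' : ℕ) := by
      by_contra hne
      have hk'le : (k' : ℕ) ≤ Δ := Nat.lt_succ_iff.mp k'.2
      have hkle : (k : ℕ) ≤ Δ := Nat.lt_succ_iff.mp k.2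
      have h1 := key π hπ k (k' : ℕ) hk'le (fun e => hne e.symm)
      have h2 := key π' hπ' k' (k : ℕ) hkle hne
      rw [h] at h1
      exact absurd h1 (not_lt.2 h2.le)
    have hkk' : k = k' := Fin.ext hk
    subst hkk'
    have hππ' : π = π' := by
      have := mul_right_cancel h
      exact this
    simp [hππ']
  have hcard : Nat.card (S × Fin (Δ + 1)) ≤ Nat.card (Equiv.Perm (Fin m)) :=
    Nat.card_le_card_of_injective _ hG
  rwa [Nat.card_prod, Nat.card_coe_set_eq, Nat.card_eq_fintype_card,
    Nat.card_eq_fintype_card, Fintype.card_fin] at hcard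

/-- if any `Δ+1` consecutive entries of the sequence `a` over
`[1,m]` (values in `Fin m`) are pairwise distinct and `π` is a uniformly random
permutation of `[1,m]`, then for each `i ∈ [1, n−Δ−1]` the probability that
`f_π(i) ≠ f_π(i+1)` is at most `2/(Δ+1)`. -/
theorem prob_localMin_changes (n m Δ : ℕ) (hΔ : 1 ≤ Δ)
    (a : ℕ → Fin m)
    (hdist : ∀ i j : ℕ, 1 ≤ i → i < j → j ≤ n → j - i ≤ Δ → a i ≠ a j) :
    ∀ i ∈ Set.Icc 1 (n - Δ - 1),
      ({π : Equiv.Perm (Fin m) |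
          localMin (fun t => π (a t)) Δ i ≠ localMin (fun t => π (a t)) Δ (i + 1)}.ncard : ℝ)
        / (Fintype.card (Equiv.Perm (Fin m)) : ℝ)
      ≤ 2 / ((Δ : ℝ) + 1) := by
  intro i hi
  obtain ⟨hi1, hi2⟩ := hi
  -- basic index bounds
  have hn : i + Δ + 1 ≤ n := by omega
  -- distinctness on the window [i, i+Δ+1]
  have hdist' : ∀ k l : ℕ, i ≤ k → i ≤ l → k ≤ i + Δ + 1 → l ≤ i + Δ + 1 → k ≠ l →
      (l : ℕ) - k ≤ Δ → (k : ℕ) - l ≤ Δ → a k ≠ a l := by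
    intro k l hk hl hk2 hl2 hkl h1 h2
    rcases lt_or_gt_of_ne hkl with h | h
    · exact hdist k l (by omega) h (by omega) (by omega)
    · exact fun e => hdist l k (by omega) h (by omega) (by omega) e.symm
  set E := {π : Equiv.Perm (Fin m) |
      localMin (fun t => π (a t)) Δ i ≠ localMin (fun t => π (a t)) Δ (i + 1)} with hE
  set A := {π : Equiv.Perm (Fin m) | ∀ l ≤ Δ, l ≠ 0 → π (a i) < π (a (i + l))} with hA
  set B := {π : Equiv.Perm (Fin m) | ∀ l ≤ Δ, l ≠ Δ → π (a (i + 1 + Δ)) < π (a (i + 1 + l))}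
    with hB
  -- inclusion E ⊆ A ∪ B
  have hsub : E ⊆ A ∪ B := by
    intro π hπ
    by_contra hnot
    simp only [Set.mem_union, not_or] at hnot
    obtain ⟨hnA, hnB⟩ := hnot
    simp only [hA, Set.mem_setOf_eq, not_forall] at hnA
    simp only [hB, Set.mem_setOf_eq, not_forall] at hnB
    obtain ⟨l₁, hl₁, hl₁0, hA1⟩ := hnA
    obtain ⟨l₂, hl₂, hl₂Δ, hB1⟩ := hnB
    set b : ℕ → Fin m := fun t => π (a t) with hb
    have hbinj : ∀ k l : ℕ, i ≤ k → i ≤ l → k ≤ i + Δ + 1 → l ≤ i + Δ + 1 → k ≠ l →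
        (l : ℕ) - k ≤ Δ → (k : ℕ) - l ≤ Δ → b k ≠ b l := by
      intro k l hk hl hk2 hl2 hkl h1 h2 he
      exact hdist' k l hk hl hk2 hl2 hkl h1 h2 (π.injective he)
    -- strict inequalities from the negations
    have hA2 : b (i + l₁) < b i := by
      have hne : b (i + l₁) ≠ b i := by
        intro he
        exact hdist' (i + l₁) i (by omega) le_rfl (by omega) (by omega) (by omega)
          (by omega) (by omega) (π.injective he)
      exact lt_of_le_of_ne (not_lt.1 hA1) hne
    have hB2 : b (i + 1 + l₂) < b (i + 1 + Δ) := by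
      have hne : b (i + 1 + l₂) ≠ b (i + 1 + Δ) := by
        intro he
        exact hdist' (i + 1 + l₂) (i + 1 + Δ) (by omega) (by omega) (by omega) (by omega)
          (by omega) (by omega) (by omega) (π.injective he)
      exact lt_of_le_of_ne (not_lt.1 hB1) hne
    -- take the minimizer j of b on [i+1, i+Δ]
    obtain ⟨j, hjmem, hjmin⟩ :=
      (Finset.Icc (i + 1) (i + Δ)).exists_min_image b
        ⟨i + 1, Finset.mem_Icc.2 ⟨le_rfl, by omega⟩⟩
    rw [Finset.mem_Icc] at hjmem
    have hjmin' : ∀ t : ℕ, i + 1 ≤ t → t ≤ i + Δ → b j ≤ b t := by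
      intro t h1 h2
      exact hjmin t (Finset.mem_Icc.2 ⟨h1, h2⟩)
    have hjlti : b j < b i := lt_of_le_of_lt (hjmin' (i + l₁) (by omega) (by omega)) hA2
    have hjltr : b j < b (i + 1 + Δ) :=
      lt_of_le_of_lt (hjmin' (i + 1 + l₂) (by omega) (by omega)) hB2
    have hstrict : ∀ t : ℕ, i + 1 ≤ t → t ≤ i + Δ → t ≠ j → b j < b t := by
      intro t h1 h2 hne
      refine lt_of_le_of_ne (hjmin' t h1 h2) ?_
      exact hbinj j t (by omega) (by omega) (by omega) (by omega) (fun e => hne e.symm)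
        (by omega) (by omega)
    have e1 : localMin b Δ i = j := by
      refine localMin_eq_of_strict b Δ i j (Set.mem_Icc.2 ⟨by omega, by omega⟩) ?_
      intro t ht htj
      rw [Set.mem_Icc] at ht
      rcases eq_or_ne t i with rfl | hti
      · exact hjlti
      · exact hstrict t (by omega) ht.2 htj
    have e2 : localMin b Δ (i + 1) = j := by
      refine localMin_eq_of_strict b Δ (i + 1) j (Set.mem_Icc.2 ⟨by omega, by omega⟩) ?_
      intro t ht htj
      rw [Set.mem_Icc] at ht
      rcases eq_or_ne t (i + 1 + Δ) with rfl | hti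
      · exact hjltr
      · exact hstrict t ht.1 (by omega) htj
    exact hπ (e1.trans e2.symm)
  -- counting bounds
  have hAcount : A.ncard * (Δ + 1) ≤ Fintype.card (Equiv.Perm (Fin m)) := by
    have := count_min_le m Δ (fun k => a (i + k)) 0 (Nat.zero_le _)
      (fun k l hk hl hkl => hdist' (i + k) (i + l) (by omega) (by omega) (by omega)
        (by omega) (by omega) (by omega) (by omega))
    simpa [hA] using this
  have hBcount : B.ncard * (Δ + 1) ≤ Fintype.card (Equiv.Perm (Fin m)) := by
    have := count_min_le m Δ (fun k => a (i + 1 + k)) Δ le_rfl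
      (fun k l hk hl hkl => hdist' (i + 1 + k) (i + 1 + l) (by omega) (by omega) (by omega)
        (by omega) (by omega) (by omega) (by omega))
    simpa [hB] using this
  have hEcount : E.ncard ≤ A.ncard + B.ncard :=
    le_trans (Set.ncard_le_ncard hsub (A.toFinite.union B.toFinite)) (Set.ncard_union_le A B)
  have hnat : E.ncard * (Δ + 1) ≤ 2 * Fintype.card (Equiv.Perm (Fin m)) := by
    calc E.ncard * (Δ + 1) ≤ (A.ncard + B.ncard) * (Δ + 1) :=
          Nat.mul_le_mul_right _ hEcount
      _ = A.ncard * (Δ + 1) + B.ncard * (Δ + 1) := by ring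
      _ ≤ 2 * Fintype.card (Equiv.Perm (Fin m)) := by omega
  have hC : (0 : ℝ) < (Fintype.card (Equiv.Perm (Fin m)) : ℝ) := by
    exact_mod_cast Fintype.card_pos
  have hΔR : (0 : ℝ) < (Δ : ℝ) + 1 := by positivity
  rw [div_le_div_iff₀ hC hΔR]
  have : ((E.ncard * (Δ + 1) : ℕ) : ℝ) ≤ ((2 * Fintype.card (Equiv.Perm (Fin m)) : ℕ) : ℝ) :=
    Nat.cast_le.2 hnat
  push_cast at this
  linarith
end
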